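/- arXiv:2309.03735 — 8 statements merged into one kernel-verified Lean document; each statement's English description precedes it below -/
import Mathlib

section
/- For any r-uniform hypergraph H and integers r, s: C_s(C_r(C_s(H))) = C_s(H), where C_k(H) denotes the set of covers of H of size exactly k. -/
open Finset

variable {V : Type*} [DecidableEq V]

/-- The vertex set of a hypergraph: the union of its edges. -/
def vertsH (H : Set (Finset V)) : Set V := ⋃ e ∈ H, (e : Set V)

/-- `c` is a cover of the hypergraph `H`: it meets every edge. -/
def IsCoverH (H : Set (Finset V)) (c : Finset V) : Prop := ∀ e ∈ H, (c ∩ e).Nonempty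

/-- The covering number of `H` equals `k`. -/
def CoverNumIs (H : Set (Finset V)) (k : ℕ) : Prop :=
  (∃ c, IsCoverH H c ∧ c.card = k) ∧ ∀ c, IsCoverH H c → k ≤ c.card

/-- `Ck H k` is the set of covers of `H` of size exactly `k`. -/
def Ck (H : Set (Finset V)) (k : ℕ) : Set (Finset V) := {c | c.card = k ∧ IsCoverH H c}

/-- `H` is `r`-uniform. -/
def UniformH (H : Set (Finset V)) (r : ℕ) : Prop := ∀ e ∈ H, e.card = r

/-- Orthogonality of hypergraphs: every pair of edges meets in exactly one vertex. -/
def OrthH (A B : Set (Finset V)) : Prop := ∀ a ∈ A, ∀ b ∈ B, (a ∩ b).card = 1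

/-- An `(r,s)`-loom. -/
def IsLoom (r s : ℕ) (A B : Set (Finset V)) : Prop :=
  1 ≤ r ∧ 1 ≤ s ∧ OrthH A B ∧ UniformH A r ∧ UniformH B s ∧
    CoverNumIs A s ∧ CoverNumIs B r ∧ A = Ck B r ∧ B = Ck A s

/-! The maps `H ↦ Ck H k` reverse inclusion, and every `r`-uniform `H` lies in `Ck (Ck H s) r`,
since each edge of `H` meets every cover of `H`. Applying this to `H` gives
`Ck (Ck (Ck H s) r) s ⊆ Ck H s`, and applying it to the `s`-uniform hypergraph `Ck H s` gives the
reverse inclusion. -/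

theorem IsCoverH.mono {G H : Set (Finset V)} {c : Finset V} (hHG : H ⊆ G) (hc : IsCoverH G c) :
    IsCoverH H c :=
  fun e he => hc e (hHG he)

theorem Ck_anti {G H : Set (Finset V)} (hHG : H ⊆ G) (k : ℕ) : Ck G k ⊆ Ck H k :=
  fun _ ⟨hcard, hc⟩ => ⟨hcard, hc.mono hHG⟩

theorem uniformH_Ck (H : Set (Finset V)) (k : ℕ) : UniformH (Ck H k) k :=
  fun _ hc => hc.1

theorem isCoverH_Ck_of_mem {H : Set (Finset V)} {e : Finset V} (he : e ∈ H) (k : ℕ) :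
    IsCoverH (Ck H k) e :=
  fun c hc => Finset.inter_comm c e ▸ hc.2 e he

theorem subset_Ck_Ck {H : Set (Finset V)} {r : ℕ} (hH : UniformH H r) (k : ℕ) :
    H ⊆ Ck (Ck H k) r :=
  fun e he => ⟨hH e he, isCoverH_Ck_of_mem he k⟩

/-- for an `r`-uniform hypergraph `H`,
`C_s(C_r(C_s(H))) = C_s(H)`. -/
theorem stmt1 (r s : ℕ) (H : Set (Finset V)) (hH : UniformH H r) :
    Ck (Ck (Ck H s) r) s = Ck H s :=
  (Ck_anti (subset_Ck_Ck hH s) s).antisymm (subset_Ck_Ck (uniformH_Ck H s) r)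
end

section
/- If (A,B) is an (r,r)-loom with r > 1, then every edge of A has an edge of A disjoint from it; in particular ν(A) ≥ 2. -/
open Finset

variable {V : Type*} [DecidableEq V]

/-- `M` is a matching of `H`: a set of pairwise disjoint edges of `H`. -/
def IsMatchingH (H : Set (Finset V)) (M : Finset (Finset V)) : Prop :=
  ↑M ⊆ H ∧ (M : Set (Finset V)).Pairwise (fun e f => Disjoint e f)

/-- The matching number of `H` equals `n`. -/
def MatchNumIs (H : Set (Finset V)) (n : ℕ) : Prop :=
  (∃ M, IsMatchingH H M ∧ M.card = n) ∧ ∀ M, IsMatchingH H M → M.card ≤ n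

/-! An edge of `A` meeting every edge of `A` is an `r`-cover of `A`, hence an edge of
`B = C_r(A)`; orthogonality would then make it meet itself in a single vertex, which `r > 1`
forbids. Two disjoint edges exist because `A = C_r(B)` is nonempty, as `τ(B) = r`. -/

theorem OrthH.card_eq_one_of_mem {A B : Set (Finset V)} (h : OrthH A B) {e : Finset V}
    (heA : e ∈ A) (heB : e ∈ B) : e.card = 1 := by
  simpa using h e heA e heB

theorem OrthH.exists_disjoint {A B : Set (Finset V)} {r : ℕ} (h : OrthH A B)
    (hA : UniformH A r) (hB : Ck A r ⊆ B) (hr : 1 < r) {e : Finset V} (he : e ∈ A) :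
    ∃ f ∈ A, Disjoint e f := by
  by_contra hno
  have hcov : IsCoverH A e := fun f hf =>
    not_disjoint_iff_nonempty_inter.mp fun hef => hno ⟨f, hf, hef⟩
  have := h.card_eq_one_of_mem he (hB ⟨hA e he, hcov⟩)
  rw [hA e he] at this
  omega

theorem isMatchingH_pair {H : Set (Finset V)} {e f : Finset V} (he : e ∈ H) (hf : f ∈ H)
    (hef : Disjoint e f) : IsMatchingH H {e, f} := by
  rw [IsMatchingH, coe_pair]
  exact ⟨Set.pair_subset he hf, Set.pairwise_pair.mpr fun _ => ⟨hef, hef.symm⟩⟩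

/-- in an `(r,r)`-loom with `r > 1`, every edge of `A` has an edge
of `A` disjoint from it; in particular `ν(A) ≥ 2`. -/
theorem stmt3 (r : ℕ) (hr : 1 < r) (A B : Set (Finset V)) (hL : IsLoom r r A B) :
    (∀ e ∈ A, ∃ f ∈ A, Disjoint e f) ∧
      (∃ M : Finset (Finset V), IsMatchingH A M ∧ 2 ≤ M.card) := by
  obtain ⟨-, -, horth, hA, -, -, ⟨⟨c, hc, hcard⟩, -⟩, hACk, hBCk⟩ := hL
  have hdisj : ∀ e ∈ A, ∃ f ∈ A, Disjoint e f := fun e he =>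
    horth.exists_disjoint hA hBCk.ge hr he
  have hcA : c ∈ A := hACk ▸ ⟨hcard, hc⟩
  obtain ⟨f, hfA, hcf⟩ := hdisj c hcA
  have hcf_ne : c ≠ f := hcf.ne (card_pos.mp (by omega)).ne_empty
  exact ⟨hdisj, {c, f}, isMatchingH_pair hcA hfA hcf, (card_pair hcf_ne).ge⟩
end

section
/- Let (A,B) be an (r,r)-loom and x, y vertices. If every edge of A containing x also contains y, then the edges of A containing x are exactly the edges of A containing y. -/
/-!
Suppose an edge `e ∈ A` contains `y` but not `x`. Edges of `A` are minimum covers of `B`, so no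
vertex of one can be dropped: `x` lies in some `b ∈ B`. Every edge of `A` through `x` passes
through `y`, so swapping `x` for `y` in a cover of `A` keeps it a cover. Hence `y ∉ b` (else
`b \ {x}` would cover `A` with fewer than `s` vertices) and `b' = b \ {x} ∪ {y}` is a cover of
size `s`, i.e. `b' ∈ B`. As `x ∉ e`, the single vertex of `e ∩ b` lies in `b'`, so `e ∩ b = e ∩ b'`
contains `y`, contradicting `y ∉ b`.
-/

open Finset

variable {V : Type*} [DecidableEq V]

theorem IsCoverH.insert_erase {H : Set (Finset V)} {c : Finset V} (hc : IsCoverH H c) {x y : V}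
    (hsub : ∀ e ∈ H, x ∈ e → y ∈ e) : IsCoverH H (insert y (c.erase x)) := by
  intro e he
  obtain ⟨v, hv⟩ := hc e he
  rw [mem_inter] at hv
  by_cases hvx : v = x
  · subst hvx
    exact ⟨y, mem_inter.2 ⟨mem_insert_self _ _, hsub e he hv.2⟩⟩
  · exact ⟨v, mem_inter.2 ⟨mem_insert_of_mem (mem_erase.2 ⟨hvx, hv.1⟩), hv.2⟩⟩

theorem CoverNumIs.not_isCoverH_erase {H : Set (Finset V)} {k : ℕ} (hH : CoverNumIs H k)
    {c : Finset V} (hc : c.card = k) {x : V} (hx : x ∈ c) : ¬IsCoverH H (c.erase x) := by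
  intro hcov
  have hle := hH.2 _ hcov
  have hpos := card_pos.2 ⟨x, hx⟩
  rw [card_erase_of_mem hx] at hle
  omega

theorem CoverNumIs.exists_mem_of_mem {H : Set (Finset V)} {k : ℕ} (hH : CoverNumIs H k)
    {c : Finset V} (hc : c ∈ Ck H k) {x : V} (hx : x ∈ c) : ∃ e ∈ H, x ∈ e := by
  by_contra! h
  refine hH.not_isCoverH_erase hc.1 hx fun e he => ?_
  obtain ⟨v, hv⟩ := hc.2 e he
  rw [mem_inter] at hv
  exact ⟨v, mem_inter.2 ⟨mem_erase.2 ⟨fun hvx => h e he (hvx ▸ hv.2), hv.1⟩, hv.2⟩⟩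

namespace IsLoom

variable {r s : ℕ} {A B : Set (Finset V)}

theorem exists_mem_of_mem_vertsH (hL : IsLoom r s A B) {x : V} (hx : x ∈ vertsH A) :
    ∃ b ∈ B, x ∈ b := by
  obtain ⟨-, -, -, -, -, -, hcovB, hAB, -⟩ := hL
  obtain ⟨a, ha, hxa⟩ : ∃ a ∈ A, x ∈ a := by simpa [vertsH] using hx
  exact hcovB.exists_mem_of_mem (hAB ▸ ha) hxa

theorem notMem_of_star_subset (hL : IsLoom r s A B) {x y : V} (hxy : x ≠ y)
    (hsub : ∀ e ∈ A, x ∈ e → y ∈ e) {b : Finset V} (hb : b ∈ B) (hxb : x ∈ b) : y ∉ b := by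
  obtain ⟨-, -, -, -, -, hcovA, -, -, hBA⟩ := hL
  have hbCk : b ∈ Ck A s := hBA ▸ hb
  intro hyb
  have hcov := hbCk.2.insert_erase hsub
  rw [insert_eq_of_mem (mem_erase.2 ⟨hxy.symm, hyb⟩)] at hcov
  exact hcovA.not_isCoverH_erase hbCk.1 hxb hcov

theorem insert_erase_mem (hL : IsLoom r s A B) {x y : V} (hsub : ∀ e ∈ A, x ∈ e → y ∈ e)
    {b : Finset V} (hb : b ∈ B) (hxb : x ∈ b) (hyb : y ∉ b) : insert y (b.erase x) ∈ B := by
  obtain ⟨-, -, -, -, -, -, -, -, hBA⟩ := hL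
  have hbCk : b ∈ Ck A s := hBA ▸ hb
  rw [hBA]
  refine ⟨?_, hbCk.2.insert_erase hsub⟩
  rw [card_insert_of_notMem fun h => hyb (mem_of_mem_erase h), card_erase_add_one hxb, hbCk.1]

theorem mem_of_star_subset (hL : IsLoom r s A B) {x y : V} (hx : x ∈ vertsH A)
    (hsub : ∀ e ∈ A, x ∈ e → y ∈ e) {e : Finset V} (he : e ∈ A) (hye : y ∈ e) : x ∈ e := by
  have horth : OrthH A B := hL.2.2.1
  by_contra hxe
  have hxy : x ≠ y := by rintro rfl; exact hxe hye
  obtain ⟨b, hb, hxb⟩ := hL.exists_mem_of_mem_vertsH hx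
  have hyb := hL.notMem_of_star_subset hxy hsub hb hxb
  have hb' := hL.insert_erase_mem hsub hb hxb hyb
  have hsubset : e ∩ b ⊆ e ∩ insert y (b.erase x) := fun v hv => by
    rw [mem_inter] at hv ⊢
    exact ⟨hv.1, mem_insert_of_mem (mem_erase.2 ⟨fun hvx => hxe (hvx ▸ hv.1), hv.2⟩)⟩
  have heq := eq_of_subset_of_card_le hsubset (by rw [horth e he b hb, horth e he _ hb'])
  have hy : y ∈ e ∩ insert y (b.erase x) := mem_inter.2 ⟨hye, mem_insert_self _ _⟩
  exact hyb (mem_inter.1 (heq ▸ hy)).2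

end IsLoom

theorem stmt4_general (r : ℕ) (A B : Set (Finset V)) (hL : IsLoom r r A B)
    (x y : V) (hx : x ∈ vertsH A)
    (hsub : ∀ e ∈ A, x ∈ e → y ∈ e) :
    {e | e ∈ A ∧ x ∈ e} = {e | e ∈ A ∧ y ∈ e} :=
  Set.ext fun _ =>
    ⟨fun ⟨he, hxe⟩ => ⟨he, hsub _ he hxe⟩, fun ⟨he, hye⟩ => ⟨he, hL.mem_of_star_subset hx hsub he hye⟩⟩

/-- in an `(r,r)`-loom, if `star_A(x) ⊆ star_A(y)` then
`star_A(x) = star_A(y)`. -/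
theorem stmt4 (r : ℕ) (A B : Set (Finset V)) (hL : IsLoom r r A B)
    (x y : V) (hx : x ∈ vertsH A) (hy : y ∈ vertsH A)
    (hsub : ∀ e ∈ A, x ∈ e → y ∈ e) :
    {e | e ∈ A ∧ x ∈ e} = {e | e ∈ A ∧ y ∈ e} :=
  stmt4_general r A B hL x y hx hsub
end

section
/- Let H1, …, Hm be pairwise cross-intersecting r-uniform hypergraphs with r ≥ 2. If m > r + 1, then τ*(H_i) < r for some i. -/
open Finset

variable {V : Type*} [DecidableEq V]

/-- Cross-intersecting pair of hypergraphs. -/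
def CrossInt (A B : Set (Finset V)) : Prop := ∀ a ∈ A, ∀ b ∈ B, (a ∩ b).Nonempty
variable [Fintype V]

/-- A fractional matching of `H`. -/
def IsFracMatching (H : Set (Finset V)) (f : Finset V → ℝ) : Prop :=
  (∀ e, 0 ≤ f e) ∧ (∀ e, e ∉ H → f e = 0) ∧
    ∀ v : V, ∑ e ∈ Finset.univ.filter (fun e : Finset V => v ∈ e), f e ≤ 1

/-- The fractional matching number of `H` equals `x`. -/
def FracMatchNumIs (H : Set (Finset V)) (x : ℝ) : Prop :=
  (∃ f, IsFracMatching H f ∧ ∑ e : Finset V, f e = x) ∧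
    ∀ f, IsFracMatching H f → ∑ e : Finset V, f e ≤ x

/-- A fractional cover of `H`. -/
def IsFracCover (H : Set (Finset V)) (g : V → ℝ) : Prop :=
  (∀ v, 0 ≤ g v) ∧ ∀ e ∈ H, 1 ≤ ∑ v ∈ e, g v

/-- The fractional covering number of `H` equals `x`. -/
def FracCoverNumIs (H : Set (Finset V)) (x : ℝ) : Prop :=
  (∃ g, IsFracCover H g ∧ ∑ v : V, g v = x) ∧
    ∀ g, IsFracCover H g → x ≤ ∑ v : V, g v

/-- A perfect fractional matching of `H`: saturated at every vertex of `H`. -/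
def IsPerfectFracMatching (H : Set (Finset V)) (f : Finset V → ℝ) : Prop :=
  IsFracMatching H f ∧
    ∀ v ∈ vertsH H, ∑ e ∈ Finset.univ.filter (fun e : Finset V => v ∈ e), f e = 1

/-! Suppose every `τ*(H i) ≥ r` and let `p` lie on an edge of `H i₀`. A sunflower with kernel
`{p}` whose `n ≥ 1` edges come from distinct `H j` can be extended by an edge of any further
`H a`: weight `1` on `p` and `1/n` on the union of the petals is a fractional cover of `H a`
(an edge missing `p` meets all `n` disjoint petals) of total weight exactly `r`, hence optimal,
and as it is positive at `p`, complementary slackness gives an edge through `p` of weight `1`,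
i.e. one avoiding every petal. Once all `m` hypergraphs are used, an edge of `H i₀` missing `p`
would meet the `m - 1 > r` disjoint petals of the others, so every edge of `H i₀` contains `p`
and `τ*(H i₀) ≤ 1 < r`. -/

section FracCover

variable {α : Type*} [DecidableEq α]

open Filter Topology in
theorem IsFracCover.exists_tight_edge [Fintype α] {G : Set (Finset α)} {g : α → ℝ}
    (hg : IsFracCover G g)
    (hmin : ∀ g', IsFracCover G g' → ∑ v, g v ≤ ∑ v, g' v) {u : α} (hu : 0 < g u) :
    ∃ e ∈ G, u ∈ e ∧ ∑ v ∈ e, g v = 1 := by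
  by_contra! hslack
  -- Lowering `g u` by a small `ε > 0` keeps a cover, since no edge through `u` is tight.
  have hsmall : ∀ᶠ ε in 𝓝[>] (0 : ℝ), ε ≤ g u ∧ ∀ e ∈ G, u ∈ e → ε ≤ ∑ v ∈ e, g v - 1 := by
    refine ((eventually_le_nhds hu).and (eventually_all.2 fun e => ?_)).filter_mono
      nhdsWithin_le_nhds
    by_cases he : e ∈ G ∧ u ∈ e
    · filter_upwards [eventually_le_nhds (sub_pos.2 ((hg.2 e he.1).lt_of_ne'
        (hslack e he.1 he.2)))] with ε hε using fun _ _ => hε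
    · exact Eventually.of_forall fun ε he' hue => absurd ⟨he', hue⟩ he
  obtain ⟨ε, ⟨hεu, hεe⟩, hε⟩ := (hsmall.and self_mem_nhdsWithin).exists
  have hsum : ∀ s : Finset α, ∑ v ∈ s, (g - Pi.single u ε : α → ℝ) v =
      ∑ v ∈ s, g v - if u ∈ s then ε else 0 := fun s => by
    simp only [Pi.sub_apply, sum_sub_distrib, sum_pi_single']
  have hcover : IsFracCover G (g - Pi.single u ε) := by
    refine ⟨fun v => ?_, fun e he => ?_⟩
    · by_cases hv : v = u
      · subst hv; simpa using hεu
      · simpa [hv] using hg.1 v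
    · rw [hsum]
      split_ifs with hue
      · linarith [hεe e he hue]
      · linarith [hg.2 e he]
  have := hmin _ hcover
  rw [hsum, if_pos (mem_univ u)] at this
  linarith

theorem isFracCover_single {G : Set (Finset α)} {p : α} (hp : ∀ e ∈ G, p ∈ e) :
    IsFracCover G (Pi.single p 1) :=
  ⟨fun v => by by_cases hv : v = p <;> simp [hv], fun e he => by simp [sum_pi_single', hp e he]⟩

end FracCover

section Sunflower

variable {α ι : Type*} [DecidableEq α]

def petals (p : α) (S : Finset ι) (b : ι → Finset α) : Finset α :=
  S.biUnion fun j => (b j).erase p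

variable {p : α} {S : Finset ι} {b : ι → Finset α}

theorem card_le_card_inter_petals {e : Finset α}
    (hdisj : (S : Set ι).PairwiseDisjoint fun j => (b j).erase p) (hp : p ∉ e)
    (hmeet : ∀ j ∈ S, (e ∩ b j).Nonempty) : #S ≤ #(e ∩ petals p S b) := by
  rw [petals, inter_biUnion]
  refine card_le_card_biUnion (hdisj.mono fun j => inter_subset_right) fun j hj => ?_
  obtain ⟨v, hv⟩ := hmeet j hj
  rw [mem_inter] at hv
  exact ⟨v, mem_inter.2 ⟨hv.1, mem_erase.2 ⟨ne_of_mem_of_not_mem hv.1 hp, hv.2⟩⟩⟩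

theorem mem_of_meets_petals_of_card_lt {e : Finset α}
    (hdisj : (S : Set ι).PairwiseDisjoint fun j => (b j).erase p)
    (hmeet : ∀ j ∈ S, (e ∩ b j).Nonempty) (hlt : #e < #S) : p ∈ e := by
  by_contra hp
  have := (card_le_card_inter_petals hdisj hp hmeet).trans (card_le_card inter_subset_left)
  omega

theorem card_petals {r : ℕ} (hdisj : (S : Set ι).PairwiseDisjoint fun j => (b j).erase p)
    (hp : ∀ j ∈ S, p ∈ b j) (hcard : ∀ j ∈ S, #(b j) = r) :
    #(petals p S b) = #S * (r - 1) := by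
  rw [petals, card_biUnion hdisj, sum_congr rfl fun j hj => by
    rw [card_erase_of_mem (hp j hj), hcard j hj], sum_const, smul_eq_mul]

theorem notMem_petals : p ∉ petals p S b := by
  simp [petals]

noncomputable def petalCover (p : α) (S : Finset ι) (b : ι → Finset α) : α → ℝ :=
  Pi.single p 1 + fun v => if v ∈ petals p S b then (#S : ℝ)⁻¹ else 0

theorem sum_petalCover (e : Finset α) :
    ∑ v ∈ e, petalCover p S b v =
      (if p ∈ e then 1 else 0) + #(e ∩ petals p S b) * (#S : ℝ)⁻¹ := by
  simp only [petalCover, Pi.add_apply, sum_add_distrib, sum_pi_single', sum_ite_mem, sum_const,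
    nsmul_eq_mul]

theorem petalCover_nonneg (v : α) : 0 ≤ petalCover p S b v := by
  simp only [petalCover, Pi.add_apply]
  apply add_nonneg
  · by_cases hv : v = p <;> simp [hv]
  · split_ifs <;> positivity

theorem isFracCover_petalCover {G : Set (Finset α)}
    (hdisj : (S : Set ι).PairwiseDisjoint fun j => (b j).erase p)
    (hmeet : ∀ e ∈ G, ∀ j ∈ S, (e ∩ b j).Nonempty) (hS : S.Nonempty) :
    IsFracCover G (petalCover p S b) := by
  refine ⟨petalCover_nonneg, fun e he => ?_⟩
  rw [sum_petalCover]
  by_cases hp : p ∈ e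
  · rw [if_pos hp]
    exact le_add_of_nonneg_right (by positivity)
  · rw [if_neg hp, zero_add, ← div_eq_mul_inv, one_le_div (by positivity)]
    exact_mod_cast card_le_card_inter_petals hdisj hp (hmeet e he)

theorem sum_univ_petalCover [Fintype α] {r : ℕ}
    (hdisj : (S : Set ι).PairwiseDisjoint fun j => (b j).erase p)
    (hp : ∀ j ∈ S, p ∈ b j) (hcard : ∀ j ∈ S, #(b j) = r) (hS : S.Nonempty) :
    ∑ v, petalCover p S b v = r := by
  obtain ⟨j, hj⟩ := hS
  have hr : 1 ≤ r := hcard j hj ▸ card_pos.2 ⟨p, hp j hj⟩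
  rw [sum_petalCover, if_pos (mem_univ p), univ_inter, card_petals hdisj hp hcard]
  push_cast [hr]
  field_simp [card_ne_zero_of_mem hj]
  ring

theorem exists_edge_disjoint_petals [Fintype α] {G : Set (Finset α)} {r : ℕ}
    (hdisj : (S : Set ι).PairwiseDisjoint fun j => (b j).erase p)
    (hp : ∀ j ∈ S, p ∈ b j) (hcard : ∀ j ∈ S, #(b j) = r)
    (hmeet : ∀ e ∈ G, ∀ j ∈ S, (e ∩ b j).Nonempty) (hS : S.Nonempty)
    (hτ : ∀ g, IsFracCover G g → (r : ℝ) ≤ ∑ v, g v) :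
    ∃ f ∈ G, p ∈ f ∧ Disjoint f (petals p S b) := by
  obtain ⟨f, hf, hpf, htight⟩ :=
    (isFracCover_petalCover hdisj hmeet hS).exists_tight_edge (u := p)
      (fun g hg => (sum_univ_petalCover hdisj hp hcard hS).trans_le (hτ g hg))
      (by simp [petalCover, notMem_petals])
  rw [sum_petalCover, if_pos hpf, add_eq_left, mul_eq_zero, inv_eq_zero, Nat.cast_eq_zero,
    Nat.cast_eq_zero, card_eq_zero, card_eq_zero, or_iff_left hS.ne_empty] at htight
  exact ⟨f, hf, hpf, disjoint_iff_inter_eq_empty.2 htight⟩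

end Sunflower

theorem exists_sunflower {α ι : Type*} [DecidableEq α] [Fintype α] [DecidableEq ι]
    {H : ι → Set (Finset α)} {r : ℕ} (hu : ∀ i, UniformH (H i) r)
    (hx : ∀ i j, i ≠ j → CrossInt (H i) (H j))
    (hτ : ∀ i g, IsFracCover (H i) g → (r : ℝ) ≤ ∑ v, g v)
    {i₀ : ι} {b₀ : Finset α} (hb₀ : b₀ ∈ H i₀) {p : α} (hp : p ∈ b₀) (S : Finset ι) :
    ∃ b : ι → Finset α, (∀ j ∈ insert i₀ S, b j ∈ H j ∧ p ∈ b j) ∧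
      ((insert i₀ S : Finset ι) : Set ι).PairwiseDisjoint fun j => (b j).erase p := by
  induction S using Finset.induction_on with
  | empty => exact ⟨fun _ => b₀, by simpa using ⟨hb₀, hp⟩, by simp⟩
  | insert a S ha ih =>
    obtain ⟨b, hb, hdisj⟩ := ih
    by_cases ha₀ : a = i₀
    · subst ha₀
      exact ⟨b, by simpa using hb, by simpa using hdisj⟩
    have haS : a ∉ insert i₀ S := by simp [ha, ha₀]
    obtain ⟨f, hf, hpf, hfU⟩ := exists_edge_disjoint_petals hdisj (fun j hj => (hb j hj).2)
      (fun j hj => hu j _ (hb j hj).1)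
      (fun e he j hj => hx a j (ne_of_mem_of_not_mem hj haS).symm e he _ (hb j hj).1)
      (insert_nonempty i₀ S) (hτ a)
    have hagree : ∀ j ∈ insert i₀ S, Function.update b a f j = b j := fun j hj =>
      Function.update_of_ne (ne_of_mem_of_not_mem hj haS) _ _
    refine ⟨Function.update b a f, ?_, ?_⟩
    · rw [insert_comm]
      intro j hj
      rcases mem_insert.1 hj with rfl | hj
      · simpa using ⟨hf, hpf⟩
      · rw [hagree j hj]
        exact hb j hj
    · rw [insert_comm, coe_insert]
      refine Set.PairwiseDisjoint.insert (fun j hj k hk hjk => ?_) fun j hj _ => ?_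
      · simpa only [Function.onFun, hagree j hj, hagree k hk] using hdisj hj hk hjk
      · rw [Function.update_self, hagree j hj]
        exact hfU.mono (erase_subset p f) (subset_biUnion_of_mem (fun j => (b j).erase p) hj)

/-- pairwise cross-intersecting `r`-uniform hypergraphs (`r ≥ 2`),
more than `r + 1` of them: some `H i` has `τ*(H i) < r`. -/
theorem stmt8 (r m : ℕ) (hr : 2 ≤ r) (hm : r + 1 < m)
    (H : Fin m → Set (Finset V))
    (hu : ∀ i, UniformH (H i) r)
    (hx : ∀ i j, i ≠ j → CrossInt (H i) (H j)) :
    ∃ i, ∃ g : V → ℝ, IsFracCover (H i) g ∧ ∑ v : V, g v < (r : ℝ) := by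
  by_contra! hτ
  let i₀ : Fin m := ⟨0, by omega⟩
  obtain ⟨b₀, hb₀⟩ : (H i₀).Nonempty := by
    by_contra! hempty
    have := hτ i₀ 0 ⟨fun _ => le_rfl, by simp [hempty]⟩
    simp only [Pi.zero_apply, sum_const_zero, Nat.cast_nonpos] at this
    omega
  obtain ⟨p, hp⟩ : b₀.Nonempty := card_pos.1 (by rw [hu i₀ b₀ hb₀]; omega)
  obtain ⟨b, hb, hdisj⟩ := exists_sunflower hu hx hτ hb₀ hp univ
  have hcenter : ∀ e ∈ H i₀, p ∈ e := fun e he =>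
    mem_of_meets_petals_of_card_lt (S := univ.erase i₀) (hdisj.subset (by simp))
      (fun j hj => hx i₀ j (ne_of_mem_erase hj).symm e he _ (hb j (by simp)).1)
      (by rw [hu i₀ e he, card_erase_of_mem (mem_univ _), card_univ, Fintype.card_fin]; omega)
  have := hτ i₀ _ (isFracCover_single hcenter)
  simp only [sum_pi_single', mem_univ, ↓reduceIte, Nat.cast_le_one] at this
  omega
end

section
/- If A and B are cross-intersecting hypergraphs, A is r-uniform, B is 2-uniform (a graph), V(A) = V(B), and there exists a set p with |p ∩ e| = 1 for every edge e of A ∪ B, then τ(A ∪ B) ≤ r. -/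
/-!
Pick an edge `a` of `A`. If `a` meets every edge of `A`, it is a cover of size `r`, since it
meets every edge of `B` by cross-intersection. Otherwise some `a' ∈ A` is disjoint from `a`;
every edge of `B` meets both, so, having two vertices, lies inside `a ∪ a'`. Hence
`V(A ∪ B) = V(B) ⊆ a ∪ a'`, and the pins `p ∩ (a ∪ a')` of `a` and `a'` cover `A ∪ B`. This
cover has at most two vertices, and `r ≥ 2` because `a ∪ a'` also contains the vertex of an
edge of `B` outside `p`.
-/

open Finset

variable {V : Type*} [DecidableEq V]

section Hypergraph

variable {A B H : Set (Finset V)}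

omit [DecidableEq V] in
@[simp]
lemma mem_vertsH {x : V} : x ∈ vertsH H ↔ ∃ e ∈ H, x ∈ e := by
  simp [vertsH]

omit [DecidableEq V] in
lemma vertsH_union : vertsH (A ∪ B) = vertsH A ∪ vertsH B :=
  Set.biUnion_union A B _

omit [DecidableEq V] in
lemma eq_empty_of_vertsH_eq_empty (hne : ∀ e ∈ H, e.Nonempty) (h : vertsH H = ∅) : H = ∅ := by
  refine Set.eq_empty_of_forall_notMem fun e he => ?_
  obtain ⟨x, hx⟩ := hne e he
  exact (Set.eq_empty_iff_forall_notMem.1 h) x (mem_vertsH.2 ⟨e, he, hx⟩)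

lemma isCoverH_union {c : Finset V} : IsCoverH (A ∪ B) c ↔ IsCoverH A c ∧ IsCoverH B c := by
  simp only [IsCoverH, Set.mem_union, or_imp, forall_and]

lemma IsCoverH.inter_of_vertsH_subset {p s : Finset V} (hp : IsCoverH H p)
    (hs : vertsH H ⊆ s) : IsCoverH H (p ∩ s) := by
  intro e he
  obtain ⟨q, hq⟩ := hp e he
  have hqe := (mem_inter.1 hq).2
  exact ⟨q, mem_inter.2 ⟨mem_inter.2 ⟨(mem_inter.1 hq).1, hs (mem_vertsH.2 ⟨e, he, hqe⟩)⟩, hqe⟩⟩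

lemma subset_union_of_card_eq_two {a a' b : Finset V} (hb : b.card = 2) (hd : Disjoint a a')
    (ha : (a ∩ b).Nonempty) (ha' : (a' ∩ b).Nonempty) : b ⊆ a ∪ a' := by
  obtain ⟨x, hx⟩ := ha
  obtain ⟨y, hy⟩ := ha'
  rw [mem_inter] at hx hy
  have hxy : x ≠ y := fun h => disjoint_left.1 hd hx.1 (h ▸ hy.1)
  have hpair : ({x, y} : Finset V) = b :=
    eq_of_subset_of_card_le (insert_subset hx.2 (singleton_subset_iff.2 hy.2))
      (by rw [hb, card_pair hxy])
  rw [← hpair]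
  exact insert_subset (mem_union_left _ hx.1) (singleton_subset_iff.2 (mem_union_right _ hy.1))

lemma vertsH_subset_union_of_disjoint {a a' : Finset V} (hBu : UniformH B 2)
    (hAB : CrossInt A B) (ha : a ∈ A) (ha' : a' ∈ A) (hd : Disjoint a a') :
    vertsH B ⊆ ↑(a ∪ a') := by
  intro q hq
  obtain ⟨b, hb, hqb⟩ := mem_vertsH.1 hq
  exact subset_union_of_card_eq_two (hBu b hb) hd (hAB a ha b hb) (hAB a' ha' b hb) hqb

lemma card_inter_add_card_sdiff_le {p s b : Finset V} (hb : b ⊆ s) :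
    (p ∩ s).card + (b \ p).card ≤ s.card := by
  rw [← card_union_of_disjoint (disjoint_left.2 fun x hx hx' => (mem_sdiff.1 hx').2
    (mem_inter.1 hx).1)]
  exact card_le_card (union_subset inter_subset_right (sdiff_subset.trans hb))

lemma exists_cover_of_disjoint_edges {r : ℕ} {p a a' : Finset V} (hAu : UniformH A r)
    (hBu : UniformH B 2) (hAB : CrossInt A B) (hV : vertsH A = vertsH B)
    (hpin : ∀ e ∈ A ∪ B, (p ∩ e).card = 1) (ha : a ∈ A) (ha' : a' ∈ A) (hd : Disjoint a a') :
    ∃ c : Finset V, IsCoverH (A ∪ B) c ∧ c.card ≤ r := by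
  have hvert : vertsH (A ∪ B) ⊆ ↑(a ∪ a') := by
    rw [vertsH_union, hV, Set.union_self]
    exact vertsH_subset_union_of_disjoint hBu hAB ha ha' hd
  have hp : IsCoverH (A ∪ B) p := fun e he => card_pos.1 (by rw [hpin e he]; exact one_pos)
  refine ⟨p ∩ (a ∪ a'), hp.inter_of_vertsH_subset hvert, ?_⟩
  have hcard_le_two : (p ∩ (a ∪ a')).card ≤ 2 := by
    rw [inter_union_distrib_left]
    refine (card_union_le _ _).trans ?_
    rw [hpin a (.inl ha), hpin a' (.inl ha')]
  obtain ⟨v, hv⟩ := hp a (.inl ha)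
  obtain ⟨b, hb, -⟩ := mem_vertsH.1 (hV ▸ mem_vertsH.2 ⟨a, ha, (mem_inter.1 hv).2⟩)
  have hb_sdiff : (b \ p).card = 1 := by
    rw [card_sdiff, hBu b hb, hpin b (.inr hb)]
  have hb_sub : b ⊆ a ∪ a' := fun y hy =>
    mem_coe.1 (hvert (mem_vertsH.2 ⟨b, .inr hb, hy⟩))
  have hroom := card_inter_add_card_sdiff_le (p := p) hb_sub
  have hunion : (a ∪ a').card ≤ r + r :=
    (card_union_le a a').trans_eq (by rw [hAu a ha, hAu a' ha'])
  omega

end Hypergraph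

theorem stmt10_general (r : ℕ) (A B : Set (Finset V))
    (hAu : UniformH A r) (hBu : UniformH B 2) (hx : CrossInt A B)
    (hV : vertsH A = vertsH B)
    (p : Finset V)
    (hpin : ∀ e ∈ A ∪ B, (p ∩ e).card = 1) :
    ∃ c : Finset V, IsCoverH (A ∪ B) c ∧ c.card ≤ r := by
  rcases A.eq_empty_or_nonempty with rfl | ⟨a, ha⟩
  · have hB : B = ∅ := by
      refine eq_empty_of_vertsH_eq_empty (fun b hb => card_pos.1 (by rw [hBu b hb]; omega)) ?_
      rw [← hV, vertsH, Set.biUnion_empty]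
    exact ⟨∅, by simp [hB, IsCoverH], by simp⟩
  by_cases hmeet : ∀ a' ∈ A, (a ∩ a').Nonempty
  · exact ⟨a, isCoverH_union.2 ⟨hmeet, hx a ha⟩, (hAu a ha).le⟩
  push Not at hmeet
  obtain ⟨a', ha', hd⟩ := hmeet
  exact exists_cover_of_disjoint_edges hAu hBu hx hV hpin ha ha'
    (disjoint_iff_inter_eq_empty.2 hd)

/-- if `A` is `r`-uniform, `B` is `2`-uniform, they are
cross-intersecting, `V(A) = V(B)`, and `A ∪ B` is pinnable, then `τ(A ∪ B) ≤ r`. -/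
theorem stmt10 (r : ℕ) (A B : Set (Finset V))
    (hAu : UniformH A r) (hBu : UniformH B 2) (hx : CrossInt A B)
    (hV : vertsH A = vertsH B)
    (p : Finset V) (hp : (p : Set V) ⊆ vertsH (A ∪ B))
    (hpin : ∀ e ∈ A ∪ B, (p ∩ e).card = 1) :
    ∃ c : Finset V, IsCoverH (A ∪ B) c ∧ c.card ≤ r :=
  stmt10_general r A B hAu hBu hx hV p hpin
end

section
/- In an (r,2)-loom (A,B), every connected component of the graph B is a complete bipartite graph with two sides of equal size. -/
open Finset

variable {V : Type*} [DecidableEq V]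

/-- The 1-skeleton of a hypergraph: two vertices are adjacent if distinct
and contained in a common edge. -/
def hGraph (H : Set (Finset V)) : SimpleGraph V where
  Adj u v := u ≠ v ∧ ∃ e ∈ H, u ∈ e ∧ v ∈ e
  symm := by
    constructor
    rintro u v ⟨huv, e, he, hu, hv⟩
    exact ⟨huv.symm, e, he, hv, hu⟩
  loopless := by
    constructor
    rintro v ⟨hv, -⟩
    exact hv rfl

/-- A hypergraph is connected if its 1-skeleton is connected on its vertex set. -/
def ConnH (H : Set (Finset V)) : Prop :=
  ∀ u ∈ vertsH H, ∀ v ∈ vertsH H, (hGraph H).Reachable u v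


open SimpleGraph

/-!
Fix a component `K` of `B` and an edge `a₀ ∈ A`. Since every `a ∈ A` meets every edge of `B` in
exactly one vertex, `a` is a proper 2-colouring of `B`; two proper 2-colourings of a connected
graph agree or are swapped, so on `K` every `a ∈ A` traces out either `X = K ∩ a₀` or
`Y = K \ a₀`. Hence every pair `{x, y}` with `x ∈ X`, `y ∈ Y` covers `A`, so lies in `B`.
As `τ(A) = 2`, some `a₁ ∈ A` traces out `Y`. Replacing `X` by `Y` in `a₀` gives a cover of `B`
of size `r - |X| + |Y|`, so `|X| ≤ |Y|` by `τ(B) = r`; symmetrically `|Y| ≤ |X|`.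
-/

theorem Finset.mem_iff_notMem_of_card_inter_pair_eq_one {a : Finset V} {u w : V} (huw : u ≠ w)
    (h : (a ∩ {u, w}).card = 1) : u ∈ a ↔ w ∉ a := by
  obtain ⟨z, hz⟩ := card_eq_one.1 h
  have hz' : z ∈ a ∩ {u, w} := hz ▸ mem_singleton_self z
  simp only [Finset.ext_iff, mem_inter, mem_insert, mem_singleton] at hz hz'
  grind

section

variable {B : Set (Finset V)}

theorem IsCoverH.sdiff_union {a Z W : Finset V} (ha : IsCoverH B a)
    (hW : ∀ e ∈ B, (Z ∩ e).Nonempty → (W ∩ e).Nonempty) : IsCoverH B (a \ Z ∪ W) := by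
  intro e he
  by_cases hZ : (Z ∩ e).Nonempty
  · obtain ⟨x, hx⟩ := hW e he hZ
    exact ⟨x, by simp_all⟩
  · obtain ⟨x, hx⟩ := ha e he
    rw [mem_inter] at hx
    have hxZ : x ∉ Z := fun hxZ => hZ ⟨x, mem_inter.2 ⟨hxZ, hx.2⟩⟩
    exact ⟨x, mem_inter.2 ⟨mem_union_left _ (mem_sdiff.2 ⟨hx.1, hxZ⟩), hx.2⟩⟩

theorem CoverNumIs.add_card_le_of_swap {r : ℕ} {a Z W : Finset V} (hB : CoverNumIs B r)
    (ha : IsCoverH B a) (hZ : Z ⊆ a) (hW : ∀ e ∈ B, (Z ∩ e).Nonempty → (W ∩ e).Nonempty) :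
    r + Z.card ≤ a.card + W.card := by
  have := hB.2 _ (ha.sdiff_union hW)
  have := card_union_le (a \ Z) W
  have := card_sdiff_add_card_eq_card hZ
  omega

theorem pair_mem_of_adj_hGraph (hB : UniformH B 2) {u w : V} (h : (hGraph B).Adj u w) :
    ({u, w} : Finset V) ∈ B := by
  obtain ⟨huw, e, he, hu, hw⟩ := h
  have hsub : ({u, w} : Finset V) ⊆ e := insert_subset hu (singleton_subset_iff.2 hw)
  rwa [eq_of_subset_of_card_le hsub (by rw [hB e he, card_pair huw])]

theorem exists_adj_hGraph_of_mem (hB : UniformH B 2) {e : Finset V} (he : e ∈ B) {p : V}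
    (hp : p ∈ e) : ∃ q, (hGraph B).Adj p q ∧ e = {p, q} := by
  obtain ⟨x, y, hxy, rfl⟩ := card_eq_two.1 (hB e he)
  rcases mem_insert.1 hp with rfl | hp
  · exact ⟨y, ⟨hxy, _, he, by simp, by simp⟩, rfl⟩
  · obtain rfl := mem_singleton.1 hp
    rw [pair_comm] at he ⊢
    exact ⟨x, ⟨hxy.symm, _, he, by simp, by simp⟩, rfl⟩

end

namespace IsLoom

variable {r s : ℕ} {A B : Set (Finset V)} {a a' : Finset V}

theorem uniformH_left (hL : IsLoom r s A B) : UniformH A r := hL.2.2.2.1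

theorem uniformH_right (hL : IsLoom r s A B) : UniformH B s := hL.2.2.2.2.1

theorem coverNumIs_right (hL : IsLoom r s A B) : CoverNumIs B r := hL.2.2.2.2.2.2.1

theorem isCoverH_of_mem (hL : IsLoom r s A B) (ha : a ∈ A) : IsCoverH B a := by
  obtain ⟨-, -, -, -, -, -, -, hA, -⟩ := hL
  rw [hA] at ha
  exact ha.2

theorem exists_mem (hL : IsLoom r s A B) : ∃ a, a ∈ A := by
  obtain ⟨-, -, -, -, -, -, ⟨⟨a, hcov, hcard⟩, -⟩, hA, -⟩ := hL
  rw [hA]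
  exact ⟨a, hcard, hcov⟩

theorem exists_notMem (hL : IsLoom r 2 A B) (x : V) : ∃ a ∈ A, x ∉ a := by
  obtain ⟨-, -, -, -, -, ⟨-, hτA⟩, -⟩ := hL
  by_contra! h
  have := hτA {x} fun a ha => ⟨x, by simp [h a ha]⟩
  simp at this

theorem mem_iff_notMem_of_adj (hL : IsLoom r 2 A B) (ha : a ∈ A) {u w : V}
    (h : (hGraph B).Adj u w) : u ∈ a ↔ w ∉ a := by
  obtain ⟨-, -, horth, -, hB, -⟩ := hL
  exact mem_iff_notMem_of_card_inter_pair_eq_one h.ne (horth a ha _ (pair_mem_of_adj_hGraph hB h))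

def coloring (hL : IsLoom r 2 A B) (ha : a ∈ A) : (hGraph B).Coloring Bool :=
  Coloring.mk (fun u => decide (u ∈ a)) fun h => by
    have := hL.mem_iff_notMem_of_adj ha h
    simp only [ne_eq, decide_eq_decide]
    tauto

theorem mem_iff_mem_iff_of_reachable (hL : IsLoom r 2 A B) (ha : a ∈ A) (ha' : a' ∈ A)
    {u w : V} (h : (hGraph B).Reachable u w) : (u ∈ a ↔ u ∈ a') ↔ (w ∈ a ↔ w ∈ a') := by
  obtain ⟨p⟩ := h
  have hc := (hL.coloring ha).even_length_iff_congr p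
  have hc' := (hL.coloring ha').even_length_iff_congr p
  simp only [coloring, Coloring.mk, RelHom.coeFn_mk, decide_eq_true_eq] at hc hc'
  tauto

theorem exists_reachable_mem (hL : IsLoom r 2 A B) (ha : a ∈ A) {v : V} (hv : v ∈ vertsH B) :
    ∃ x, (hGraph B).Reachable v x ∧ x ∈ a := by
  obtain ⟨e, he, hve⟩ : ∃ e ∈ B, v ∈ e := by simpa [vertsH] using hv
  obtain ⟨w, hvw, -⟩ := exists_adj_hGraph_of_mem hL.uniformH_right he hve
  by_cases hva : v ∈ a
  · exact ⟨v, .refl v, hva⟩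
  · exact ⟨w, hvw.reachable, by have := hL.mem_iff_notMem_of_adj ha hvw; tauto⟩

theorem exists_reachable_eq_pair (hL : IsLoom r 2 A B) (ha : a ∈ A) {e : Finset V} (he : e ∈ B)
    {p : V} (hp : p ∈ e) : ∃ x y, (hGraph B).Reachable p x ∧ (hGraph B).Reachable p y ∧
      x ∈ a ∧ y ∉ a ∧ e = {x, y} := by
  obtain ⟨q, hpq, rfl⟩ := exists_adj_hGraph_of_mem hL.uniformH_right he hp
  have := hL.mem_iff_notMem_of_adj ha hpq
  by_cases hpa : p ∈ a
  · exact ⟨p, q, .refl p, hpq.reachable, hpa, this.1 hpa, rfl⟩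
  · exact ⟨q, p, hpq.reachable, .refl p, by tauto, hpa, pair_comm p q⟩

theorem pair_mem_of_reachable (hL : IsLoom r 2 A B) (ha : a ∈ A) {x y : V}
    (h : (hGraph B).Reachable x y) (hx : x ∈ a) (hy : y ∉ a) : ({x, y} : Finset V) ∈ B := by
  have hagree (a' : Finset V) (ha' : a' ∈ A) := hL.mem_iff_mem_iff_of_reachable ha' ha h
  obtain ⟨-, -, -, -, -, -, -, -, hB⟩ := hL
  rw [hB]
  refine ⟨card_pair (ne_of_mem_of_not_mem hx hy), fun a' ha' => ?_⟩
  by_cases hxa' : x ∈ a'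
  · exact ⟨x, by simp [hxa']⟩
  · have := hagree a' ha'
    exact ⟨y, mem_inter.2 ⟨by simp, by tauto⟩⟩

/-- The exchange argument: swapping the trace of `a` on `K` for that of `a'` keeps a cover of
`B`, which has at least `τ(B) = |a|` vertices. -/
theorem ncard_inter_le (hL : IsLoom r 2 A B) (ha : a ∈ A) {K : Set V}
    (hK : ∀ u w, (hGraph B).Adj u w → u ∈ K → w ∈ K) (hcompl : ∀ u ∈ K, u ∈ a' ↔ u ∉ a) :
    (K ∩ a).ncard ≤ (K ∩ a').ncard := by
  classical
  have hW : ∀ e ∈ B, (a.filter (· ∈ K) ∩ e).Nonempty → (a'.filter (· ∈ K) ∩ e).Nonempty := by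
    rintro e he ⟨p, hp⟩
    simp only [mem_inter, mem_filter] at hp
    obtain ⟨q, hpq, rfl⟩ := exists_adj_hGraph_of_mem hL.uniformH_right he hp.2
    have hq := hK p q hpq hp.1.2
    exact ⟨q, by simp [(hcompl q hq).2 ((hL.mem_iff_notMem_of_adj ha hpq).1 hp.1.1), hq]⟩
  have hcard :=
    hL.coverNumIs_right.add_card_le_of_swap (hL.isCoverH_of_mem ha) (filter_subset _ a) hW
  have hncard (b : Finset V) : (K ∩ b).ncard = (b.filter (· ∈ K)).card := by
    rw [← Set.ncard_coe_finset, coe_filter]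
    congr 1
    ext
    simp [and_comm]
  rw [hL.uniformH_left a ha] at hcard
  rw [hncard, hncard]
  omega

end IsLoom

/-- in an `(r,2)`-loom, every connected component of the graph `B`
is a complete bipartite graph with two sides of equal size. -/
theorem stmt15 (r : ℕ) (A B : Set (Finset V)) (hL : IsLoom r 2 A B) :
    ∀ v ∈ vertsH B, ∃ X Y : Set V, Disjoint X Y ∧
      X ∪ Y = {u | (hGraph B).Reachable v u} ∧ X.ncard = Y.ncard ∧
      (∀ e : Finset V, (e ∈ B ∧ (e : Set V) ⊆ X ∪ Y) ↔
        ∃ x ∈ X, ∃ y ∈ Y, e = ({x, y} : Finset V)) := by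
  intro v hv
  set K : Set V := {u | (hGraph B).Reachable v u}
  have hK : ∀ u w, (hGraph B).Adj u w → u ∈ K → w ∈ K := fun u w h hu => hu.trans h.reachable
  obtain ⟨a₀, ha₀⟩ := hL.exists_mem
  obtain ⟨x₀, hx₀K, hx₀⟩ := hL.exists_reachable_mem ha₀ hv
  obtain ⟨a₁, ha₁, hx₀a₁⟩ := hL.exists_notMem x₀
  have hcompl : ∀ u ∈ K, u ∈ a₁ ↔ u ∉ a₀ := fun u hu => by
    have := hL.mem_iff_mem_iff_of_reachable ha₁ ha₀ (hx₀K.symm.trans hu)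
    tauto
  have hY : K \ a₀ = K ∩ a₁ := by
    ext u
    simp only [Set.mem_sdiff, Set.mem_inter_iff, mem_coe]
    have := hcompl u
    tauto
  refine ⟨K ∩ a₀, K \ a₀, Set.disjoint_sdiff_inter.symm, Set.inter_union_sdiff K a₀, ?_,
    fun e => ⟨?_, ?_⟩⟩
  · rw [hY]
    refine le_antisymm (hL.ncard_inter_le ha₀ hK hcompl) (hL.ncard_inter_le ha₁ hK ?_)
    exact fun u hu => by have := hcompl u hu; tauto
  · rintro ⟨he, hsub⟩
    obtain ⟨p, hp⟩ := card_pos.1 (by rw [hL.uniformH_right e he]; norm_num)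
    have hpK : p ∈ K := Set.inter_union_sdiff K a₀ ▸ hsub (mem_coe.2 hp)
    obtain ⟨x, y, hx, hy, hxa, hya, rfl⟩ := hL.exists_reachable_eq_pair ha₀ he hp
    exact ⟨x, ⟨hpK.trans hx, hxa⟩, y, ⟨hpK.trans hy, hya⟩, rfl⟩
  · rintro ⟨x, hx, y, hy, rfl⟩
    refine ⟨hL.pair_mem_of_reachable ha₀ (hx.1.symm.trans hy.1) hx.2 hy.2, ?_⟩
    simpa [Set.insert_subset_iff] using And.intro hx.1 hy.1
end

section
/- For even n ≥ 6, the pair (PM(K_n), ST(K_n)) is an (n/2, n−1)-loom, where PM(K_n) is the set of perfect matchings of the complete graph K_n (as sets of edges) and ST(K_n) is the set of vertex stars. -/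
/-!
A perfect matching meets every star in exactly one edge, so the two families are orthogonal and
each consists of covers of the other.

An edge covers at most two vertices, so a cover of the `n` stars has at least `n / 2` edges, and
`n / 2` edges cover all stars only if every vertex lies in exactly one of them, i.e. they form a
perfect matching.

Relabelling vertices shows that every edge lies in the same number `p` of perfect matchings, and
since each perfect matching uses exactly one of the `n - 1` edges at a fixed vertex there are
`(n - 1) p` of them. Writing `#PM(g)` for the number of perfect matchings through `g`, a cover
`c` of the perfect matchings satisfies `(n - 1) p ≤ ∑_{g ∈ c} #PM(g) ≤ #c p`, so `#c ≥ n - 1`. If `#c = n - 1` the bound is tight: no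
edge of `c` is a loop and no perfect matching contains two edges of `c`. Any two disjoint edges
extend to a perfect matching, so `c` is an intersecting family of `n - 1 ≥ 5` edges; such a
family lies in a star unless it lies in a triangle, so `c` is a star.
-/

open Finset

open scoped Classical

variable {V : Type*} [DecidableEq V]

/-- The perfect matchings of the complete graph `K_n`, as sets of edges. -/
def PMn (n : ℕ) : Set (Finset (Sym2 (Fin n))) :=
  {M | (∀ e ∈ M, ¬ e.IsDiag) ∧ ∀ v : Fin n, ∃! e, e ∈ M ∧ v ∈ e}

/-- The vertex stars of `K_n`, as sets of edges. -/
def STn (n : ℕ) : Set (Finset (Sym2 (Fin n))) :=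
  {S | ∃ v : Fin n,
    S = Finset.univ.filter (fun e : Sym2 (Fin n) => v ∈ e ∧ ¬ e.IsDiag)}

theorem OrthH.isCoverH_left {A B : Set (Finset V)} (h : OrthH A B) {a : Finset V} (ha : a ∈ A) :
    IsCoverH B a := fun b hb => card_pos.1 (by rw [h a ha b hb]; exact one_pos)

theorem OrthH.isCoverH_right {A B : Set (Finset V)} (h : OrthH A B) {b : Finset V} (hb : b ∈ B) :
    IsCoverH A b := fun a ha => card_pos.1 (by rw [inter_comm, h a ha b hb]; exact one_pos)

theorem OrthH.isLoom {A B : Set (Finset V)} {r s : ℕ} (hAB : OrthH A B)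
    (hA : UniformH A r) (hB : UniformH B s) (hA₀ : A.Nonempty) (hB₀ : B.Nonempty)
    (hτA : ∀ c, IsCoverH A c → s ≤ #c) (hCA : ∀ c, IsCoverH A c → #c = s → c ∈ B)
    (hτB : ∀ c, IsCoverH B c → r ≤ #c) (hCB : ∀ c, IsCoverH B c → #c = r → c ∈ A) :
    IsLoom r s A B := by
  obtain ⟨a, ha⟩ := hA₀
  obtain ⟨b, hb⟩ := hB₀
  have hab := hAB a ha b hb
  refine ⟨?_, ?_, hAB, hA, hB, ⟨⟨b, hAB.isCoverH_right hb, hB b hb⟩, hτA⟩,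
    ⟨⟨a, hAB.isCoverH_left ha, hA a ha⟩, hτB⟩, ?_, ?_⟩
  · rw [← hA a ha, ← hab]; exact card_le_card inter_subset_left
  · rw [← hB b hb, ← hab]; exact card_le_card inter_subset_right
  · ext c
    exact ⟨fun hc => ⟨hA c hc, hAB.isCoverH_left hc⟩, fun hc => hCB c hc.2 hc.1⟩
  · ext c
    exact ⟨fun hc => ⟨hB c hc, hAB.isCoverH_right hc⟩, fun hc => hCA c hc.2 hc.1⟩

theorem Finset.card_biUnion_add_card_inter_le {ι β : Type*} [DecidableEq ι] [DecidableEq β]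
    {s : Finset ι} {t : ι → Finset β} {i j : ι} (hi : i ∈ s) (hj : j ∈ s) (hij : i ≠ j) :
    #(s.biUnion t) + #(t i ∩ t j) ≤ ∑ k ∈ s, #(t k) := by
  set s' := (s.erase i).erase j
  have hjs : j ∈ s.erase i := mem_erase.2 ⟨hij.symm, hj⟩
  have hs : s = insert i (insert j s') := by rw [insert_erase hjs, insert_erase hi]
  have hi' : i ∉ insert j s' := by simp [s', hij]
  rw [hs, biUnion_insert, biUnion_insert, sum_insert hi', sum_insert (notMem_erase j _),
    ← union_assoc]
  calc #(t i ∪ t j ∪ s'.biUnion t) + #(t i ∩ t j)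
      ≤ #(t i ∪ t j) + #(t i ∩ t j) + #(s'.biUnion t) := by
        have := card_union_le (t i ∪ t j) (s'.biUnion t); omega
    _ ≤ #(t i) + (#(t j) + ∑ k ∈ s', #(t k)) := by
        rw [card_union_add_card_inter]; have := card_biUnion_le (s := s') (t := t); omega

namespace Sym2

variable {α : Type*}

theorem exists_perm_map_eq [DecidableEq α] {a b c d : α} (hab : a ≠ b) (hcd : c ≠ d) :
    ∃ σ : Equiv.Perm α, map σ s(a, b) = s(c, d) := by
  set b' := Equiv.swap a c b
  have hb' : c ≠ b' := by
    rw [← Equiv.swap_apply_left a c]; exact (Equiv.swap a c).injective.ne hab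
  refine ⟨(Equiv.swap a c).trans (Equiv.swap b' d), ?_⟩
  simp [Equiv.swap_apply_of_ne_of_ne hb' hcd, b']

theorem mem_of_exists_mem_of_notMem {a b : α} {e : Sym2 α} (h : ∃ v, v ∈ s(a, b) ∧ v ∈ e)
    (ha : a ∉ e) : b ∈ e := by
  obtain ⟨v, hv, hve⟩ := h
  rcases mem_iff.1 hv with rfl | rfl
  exacts [absurd hve ha, hve]

theorem mem_triangle_of_meets [DecidableEq α] {a b x : α} (hab : a ≠ b) (hax : a ≠ x)
    (hbx : b ≠ x) {k : Sym2 α} (h₁ : ∃ v, v ∈ k ∧ v ∈ s(a, b))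
    (h₂ : ∃ v, v ∈ k ∧ v ∈ s(b, x)) (h₃ : ∃ v, v ∈ k ∧ v ∈ s(a, x)) :
    k ∈ ({s(a, b), s(b, x), s(a, x)} : Finset (Sym2 α)) := by
  induction k using Sym2.ind with
  | _ u w =>
    simp only [mem_iff] at h₁ h₂ h₃
    simp only [Finset.mem_insert, Finset.mem_singleton, eq_iff]
    grind

theorem card_toFinset_le_two [DecidableEq α] (z : Sym2 α) : #z.toFinset ≤ 2 := by
  rw [card_toFinset]; split_ifs <;> omega

theorem filter_eq_subset_toFinset [Fintype α] [DecidableEq α] {f : α → Sym2 α}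
    (hf : ∀ v, v ∈ f v) (e : Sym2 α) : ({v | f v = e} : Finset α) ⊆ e.toFinset := fun v hv =>
  mem_toFinset.2 ((mem_filter.1 hv).2 ▸ hf v)

theorem exists_forall_mem_of_intersecting [DecidableEq α] {c : Finset (Sym2 α)}
    (hc : 4 ≤ #c) (hnd : ∀ g ∈ c, ¬g.IsDiag) (hint : ∀ g ∈ c, ∀ h ∈ c, ∃ v, v ∈ g ∧ v ∈ h) :
    ∃ v, ∀ g ∈ c, v ∈ g := by
  obtain ⟨g₀, hg₀⟩ := card_pos.1 (by omega : 0 < #c)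
  induction g₀ using Sym2.ind with
  | _ a b =>
  by_contra! hnot
  obtain ⟨e, he, hae⟩ := hnot a
  obtain ⟨f, hf, hbf⟩ := hnot b
  have hbe := mem_of_exists_mem_of_notMem (hint _ hg₀ _ he) hae
  obtain ⟨x, rfl⟩ := mem_iff_exists.1 hbe
  have haf := mem_of_exists_mem_of_notMem (eq_swap ▸ hint _ hg₀ _ hf) hbf
  have hxf := mem_of_exists_mem_of_notMem (hint _ he _ hf) hbf
  obtain ⟨y, rfl⟩ := mem_iff_exists.1 haf
  have hax : a ≠ x := fun h => hae (h ▸ mem_mk_right b a)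
  obtain rfl : x = y := (mem_iff.1 hxf).resolve_left hax.symm
  have hsub : c ⊆ {s(a, b), s(b, x), s(a, x)} := fun k hk =>
    mem_triangle_of_meets (fun h => hnd _ hg₀ (mk_isDiag_iff.2 h)) hax
      (fun h => hnd _ he (mk_isDiag_iff.2 h)) (hint _ hk _ hg₀) (hint _ hk _ he)
      (hint _ hk _ hf)
  have := (card_le_card hsub).trans card_le_three
  omega

end Sym2

section PerfectMatchingOn

variable {α : Type*} [DecidableEq α]

def IsPerfectMatchingOn (T : Finset α) (M : Finset (Sym2 α)) : Prop :=
  (∀ e ∈ M, ¬e.IsDiag) ∧ (∀ e ∈ M, ∀ v ∈ e, v ∈ T) ∧ ∀ v ∈ T, ∃! e, e ∈ M ∧ v ∈ e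

theorem isPerfectMatchingOn_pair {a b : α} (hab : a ≠ b) :
    IsPerfectMatchingOn {a, b} {s(a, b)} := by
  refine ⟨by simpa using hab, fun e he v hv => ?_, fun v hv => ⟨s(a, b), ?_, ?_⟩⟩
  · rw [mem_singleton.1 he] at hv; simpa using hv
  · simpa using hv
  · simp

theorem IsPerfectMatchingOn.union {T T' : Finset α} {M M' : Finset (Sym2 α)}
    (hT : Disjoint T T') (hM : IsPerfectMatchingOn T M) (hM' : IsPerfectMatchingOn T' M') :
    IsPerfectMatchingOn (T ∪ T') (M ∪ M') := by
  obtain ⟨hd, hv, hu⟩ := hM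
  obtain ⟨hd', hv', hu'⟩ := hM'
  refine ⟨?_, ?_, ?_⟩
  · simp only [mem_union]; rintro e (he | he); exacts [hd e he, hd' e he]
  · simp only [mem_union]
    rintro e (he | he) v hve
    exacts [.inl (hv e he v hve), .inr (hv' e he v hve)]
  · intro v hvT
    rcases mem_union.1 hvT with hvT | hvT
    · obtain ⟨e, ⟨he, hve⟩, huniq⟩ := hu v hvT
      refine ⟨e, ⟨mem_union_left _ he, hve⟩, fun f ⟨hf, hvf⟩ => ?_⟩
      rcases mem_union.1 hf with hf | hf
      exacts [huniq f ⟨hf, hvf⟩, absurd (hv' f hf v hvf) (disjoint_left.1 hT hvT)]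
    · obtain ⟨e, ⟨he, hve⟩, huniq⟩ := hu' v hvT
      refine ⟨e, ⟨mem_union_right _ he, hve⟩, fun f ⟨hf, hvf⟩ => ?_⟩
      rcases mem_union.1 hf with hf | hf
      exacts [absurd (hv f hf v hvf) (disjoint_right.1 hT hvT), huniq f ⟨hf, hvf⟩]

theorem exists_isPerfectMatchingOn (T : Finset α) (hT : Even #T) :
    ∃ M, IsPerfectMatchingOn T M := by
  induction T using Finset.strongInduction with
  | _ T ih =>
  rcases T.eq_empty_or_nonempty with rfl | ⟨a, ha⟩
  · exact ⟨∅, by simp [IsPerfectMatchingOn]⟩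
  obtain ⟨b, hb⟩ : (T.erase a).Nonempty := by
    have := card_pos.2 ⟨a, ha⟩
    obtain ⟨k, hk⟩ := hT
    rw [← card_pos, card_erase_of_mem ha]
    omega
  have hab : a ≠ b := (ne_of_mem_erase hb).symm
  have hpair : {a, b} ⊆ T := insert_subset ha (singleton_subset_iff.2 (mem_of_mem_erase hb))
  obtain ⟨M, hM⟩ := ih (T \ {a, b}) (sdiff_ssubset hpair (insert_nonempty a {b})) (by
    rw [card_sdiff_of_subset hpair, card_pair hab]
    exact (Nat.even_sub (card_pair hab ▸ card_le_card hpair)).2 (iff_of_true hT even_two))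
  refine ⟨{s(a, b)} ∪ M, ?_⟩
  simpa [union_sdiff_of_subset hpair] using
    (isPerfectMatchingOn_pair hab).union disjoint_sdiff hM

end PerfectMatchingOn

section CompleteGraph

variable {n : ℕ}

theorem isPerfectMatchingOn_univ_iff {M : Finset (Sym2 (Fin n))} :
    IsPerfectMatchingOn univ M ↔ M ∈ PMn n := by
  simp [IsPerfectMatchingOn, PMn]

theorem exists_mem_PMn_superset (hn : Even n) {T : Finset (Fin n)} {M : Finset (Sym2 (Fin n))}
    (hT : Even #T) (hM : IsPerfectMatchingOn T M) : ∃ M' ∈ PMn n, M ⊆ M' := by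
  obtain ⟨M', hM'⟩ := exists_isPerfectMatchingOn Tᶜ (by
    rw [card_compl, Fintype.card_fin]
    exact (Nat.even_sub (card_le_univ T |>.trans_eq (Fintype.card_fin n))).2 (iff_of_true hn hT))
  refine ⟨M ∪ M', isPerfectMatchingOn_univ_iff.1 ?_, subset_union_left⟩
  simpa using hM.union disjoint_compl_right hM'

theorem exists_mem_PMn_of_ne (hn : Even n) {a b : Fin n} (hab : a ≠ b) :
    ∃ M ∈ PMn n, s(a, b) ∈ M := by
  obtain ⟨M, hM, hsub⟩ := exists_mem_PMn_superset hn (by rw [card_pair hab]; exact even_two)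
    (isPerfectMatchingOn_pair hab)
  exact ⟨M, hM, hsub (mem_singleton_self _)⟩

theorem exists_mem_PMn_of_disjoint (hn : Even n) {a b c d : Fin n} (hab : a ≠ b) (hcd : c ≠ d)
    (h : Disjoint ({a, b} : Finset (Fin n)) {c, d}) :
    ∃ M ∈ PMn n, s(a, b) ∈ M ∧ s(c, d) ∈ M := by
  obtain ⟨M, hM, hsub⟩ := exists_mem_PMn_superset hn
    (by rw [card_union_of_disjoint h, card_pair hab, card_pair hcd]; decide)
    ((isPerfectMatchingOn_pair hab).union h (isPerfectMatchingOn_pair hcd))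
  exact ⟨M, hM, hsub (by simp), hsub (by simp)⟩

theorem two_mul_card_of_mem_PMn {M : Finset (Sym2 (Fin n))} (hM : M ∈ PMn n) : 2 * #M = n := by
  obtain ⟨hd, hu⟩ := hM
  have hcover : M.biUnion Sym2.toFinset = univ :=
    eq_univ_of_forall fun v => by
      obtain ⟨e, ⟨he, hve⟩, -⟩ := hu v
      exact mem_biUnion.2 ⟨e, he, Sym2.mem_toFinset.2 hve⟩
  have hdisj : (M : Set (Sym2 (Fin n))).PairwiseDisjoint Sym2.toFinset := by
    intro e he f hf hef
    refine disjoint_left.2 fun v hve hvf => hef ?_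
    exact (hu v).unique ⟨he, Sym2.mem_toFinset.1 hve⟩ ⟨hf, Sym2.mem_toFinset.1 hvf⟩
  have := card_biUnion hdisj
  rw [hcover, card_univ, Fintype.card_fin,
    sum_congr rfl fun e he => Sym2.card_toFinset_of_not_isDiag e (hd e he)] at this
  simp [this, mul_comm]

theorem mem_incidenceFinset_top {v : Fin n} {e : Sym2 (Fin n)} :
    e ∈ (⊤ : SimpleGraph (Fin n)).incidenceFinset v ↔ v ∈ e ∧ ¬e.IsDiag := by
  simp [SimpleGraph.incidenceSet, and_comm]

theorem mem_STn_iff {S : Finset (Sym2 (Fin n))} :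
    S ∈ STn n ↔ ∃ v, S = (⊤ : SimpleGraph (Fin n)).incidenceFinset v := by
  refine exists_congr fun v => Eq.congr_right ?_
  ext e
  simp only [mem_filter, mem_univ, true_and, mem_incidenceFinset_top]

theorem card_incidenceFinset_top (v : Fin n) :
    #((⊤ : SimpleGraph (Fin n)).incidenceFinset v) = n - 1 := by
  simp

theorem card_inter_incidenceFinset_of_mem_PMn {M : Finset (Sym2 (Fin n))} (hM : M ∈ PMn n)
    (v : Fin n) : #(M ∩ (⊤ : SimpleGraph (Fin n)).incidenceFinset v) = 1 := by
  obtain ⟨e, ⟨he, hve⟩, huniq⟩ := hM.2 v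
  refine card_eq_one.2 ⟨e, ext fun f => ?_⟩
  simp only [mem_inter, mem_incidenceFinset_top, mem_singleton]
  exact ⟨fun ⟨hf, hvf, _⟩ => huniq f ⟨hf, hvf⟩, fun hfe => hfe ▸ ⟨he, hve, hM.1 e he⟩⟩

theorem orthH_PMn_STn : OrthH (PMn n) (STn n) := by
  intro M hM S hS
  obtain ⟨v, rfl⟩ := mem_STn_iff.1 hS
  exact card_inter_incidenceFinset_of_mem_PMn hM v

theorem image_map_mem_PMn (σ : Equiv.Perm (Fin n)) {M : Finset (Sym2 (Fin n))} (hM : M ∈ PMn n) :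
    M.image (Sym2.map σ) ∈ PMn n := by
  obtain ⟨hd, hu⟩ := hM
  refine ⟨?_, fun v => ?_⟩
  · simpa [Sym2.isDiag_map σ.injective] using hd
  obtain ⟨e, ⟨he, hve⟩, huniq⟩ := hu (σ.symm v)
  refine ⟨e.map σ, ⟨mem_image_of_mem _ he, Sym2.mem_map.2 ⟨_, hve, σ.apply_symm_apply v⟩⟩, ?_⟩
  rintro _ ⟨hf', hvf⟩
  obtain ⟨f, hf, rfl⟩ := mem_image.1 hf'
  obtain ⟨w, hwf, rfl⟩ := Sym2.mem_map.1 hvf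
  rw [huniq f ⟨hf, by simpa using hwf⟩]

noncomputable def perfectMatchings (n : ℕ) : Finset (Finset (Sym2 (Fin n))) := {M | M ∈ PMn n}

noncomputable def perfectMatchingsThrough (g : Sym2 (Fin n)) : Finset (Finset (Sym2 (Fin n))) :=
  {M ∈ perfectMatchings n | g ∈ M}

theorem mem_perfectMatchingsThrough {g : Sym2 (Fin n)} {M : Finset (Sym2 (Fin n))} :
    M ∈ perfectMatchingsThrough g ↔ M ∈ PMn n ∧ g ∈ M := by
  simp [perfectMatchingsThrough, perfectMatchings]

theorem perfectMatchingsThrough_eq_empty {g : Sym2 (Fin n)} (hg : g.IsDiag) :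
    perfectMatchingsThrough g = ∅ :=
  eq_empty_of_forall_notMem fun _ hM =>
    (mem_perfectMatchingsThrough.1 hM).1.1 g (mem_perfectMatchingsThrough.1 hM).2 hg

theorem card_perfectMatchingsThrough_le {g h : Sym2 (Fin n)} (hg : ¬g.IsDiag) (hh : ¬h.IsDiag) :
    #(perfectMatchingsThrough g) ≤ #(perfectMatchingsThrough h) := by
  induction g using Sym2.ind with | _ a b =>
  induction h using Sym2.ind with | _ c d =>
  obtain ⟨σ, hσ⟩ := Sym2.exists_perm_map_eq (Sym2.mk_isDiag_iff.not.1 hg)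
    (Sym2.mk_isDiag_iff.not.1 hh)
  refine card_le_card_of_injOn (·.image (Sym2.map σ)) (fun M hM => ?_)
    (image_injective (Sym2.map.injective σ.injective)).injOn
  rw [mem_coe, mem_perfectMatchingsThrough] at hM ⊢
  exact ⟨image_map_mem_PMn σ hM.1, hσ ▸ mem_image_of_mem _ hM.2⟩

theorem card_perfectMatchingsThrough_eq {g h : Sym2 (Fin n)} (hg : ¬g.IsDiag) (hh : ¬h.IsDiag) :
    #(perfectMatchingsThrough g) = #(perfectMatchingsThrough h) :=
  (card_perfectMatchingsThrough_le hg hh).antisymm (card_perfectMatchingsThrough_le hh hg)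

theorem card_perfectMatchingsThrough_le_of_not_isDiag {g : Sym2 (Fin n)} (hg : ¬g.IsDiag)
    (k : Sym2 (Fin n)) : #(perfectMatchingsThrough k) ≤ #(perfectMatchingsThrough g) := by
  by_cases hk : k.IsDiag
  · simp [perfectMatchingsThrough_eq_empty hk]
  · exact card_perfectMatchingsThrough_le hk hg

theorem card_perfectMatchingsThrough_pos (hn : Even n) {g : Sym2 (Fin n)} (hg : ¬g.IsDiag) :
    0 < #(perfectMatchingsThrough g) := by
  induction g using Sym2.ind with | _ a b =>
  obtain ⟨M, hM, hgM⟩ := exists_mem_PMn_of_ne hn (Sym2.mk_isDiag_iff.not.1 hg)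
  exact card_pos.2 ⟨M, mem_perfectMatchingsThrough.2 ⟨hM, hgM⟩⟩

theorem card_perfectMatchings {a b : Fin n} (hab : a ≠ b) :
    #(perfectMatchings n) = (n - 1) * #(perfectMatchingsThrough s(a, b)) := by
  have hstar : perfectMatchings n =
      ((⊤ : SimpleGraph (Fin n)).incidenceFinset a).biUnion perfectMatchingsThrough := by
    ext M
    simp only [mem_biUnion, mem_perfectMatchingsThrough, mem_incidenceFinset_top]
    refine ⟨fun hM => ?_, fun ⟨_, _, hM, _⟩ => by simpa [perfectMatchings] using hM⟩
    rw [perfectMatchings, mem_filter] at hM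
    obtain ⟨e, ⟨he, hae⟩, -⟩ := hM.2.2 a
    exact ⟨e, ⟨hae, hM.2.1 e he⟩, hM.2, he⟩
  have hdisj : ((⊤ : SimpleGraph (Fin n)).incidenceFinset a : Set (Sym2 (Fin n))).PairwiseDisjoint
      perfectMatchingsThrough := by
    intro e he f hf hef
    refine disjoint_left.2 fun M hMe hMf => hef ?_
    rw [mem_perfectMatchingsThrough] at hMe hMf
    exact (hMe.1.2 a).unique ⟨hMe.2, (mem_incidenceFinset_top.1 he).1⟩
      ⟨hMf.2, (mem_incidenceFinset_top.1 hf).1⟩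
  rw [hstar, card_biUnion hdisj, sum_congr rfl fun e he =>
    card_perfectMatchingsThrough_eq (mem_incidenceFinset_top.1 he).2
      (Sym2.mk_isDiag_iff.not.2 hab), sum_const, card_incidenceFinset_top, smul_eq_mul]

theorem biUnion_perfectMatchingsThrough {c : Finset (Sym2 (Fin n))} (hc : IsCoverH (PMn n) c) :
    c.biUnion perfectMatchingsThrough = perfectMatchings n := by
  ext M
  simp only [mem_biUnion, mem_perfectMatchingsThrough]
  refine ⟨fun ⟨_, _, hM, _⟩ => by simpa [perfectMatchings] using hM, fun hM => ?_⟩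
  rw [perfectMatchings, mem_filter] at hM
  obtain ⟨g, hg⟩ := hc M hM.2
  exact ⟨g, (mem_inter.1 hg).1, hM.2, (mem_inter.1 hg).2⟩

theorem sum_card_perfectMatchingsThrough_le {c : Finset (Sym2 (Fin n))} {g : Sym2 (Fin n)}
    (hg : ¬g.IsDiag) : ∑ k ∈ c, #(perfectMatchingsThrough k) ≤ #c * #(perfectMatchingsThrough g) :=
  (sum_le_sum fun k _ => card_perfectMatchingsThrough_le_of_not_isDiag hg k).trans_eq
    (by rw [sum_const, smul_eq_mul])

theorem le_card_of_isCoverH_PMn (hn : Even n) {c : Finset (Sym2 (Fin n))}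
    (hc : IsCoverH (PMn n) c) : n - 1 ≤ #c := by
  rcases lt_or_ge n 2 with h2 | h2
  · omega
  obtain ⟨a, b, hab⟩ := (Fin.nontrivial_iff_two_le.2 h2).exists_pair_ne
  have hab' : ¬s(a, b).IsDiag := Sym2.mk_isDiag_iff.not.2 hab
  refine le_of_mul_le_mul_right ?_ (card_perfectMatchingsThrough_pos hn hab')
  calc (n - 1) * #(perfectMatchingsThrough s(a, b))
      = #(perfectMatchings n) := (card_perfectMatchings hab).symm
    _ ≤ ∑ k ∈ c, #(perfectMatchingsThrough k) :=
        biUnion_perfectMatchingsThrough hc ▸ card_biUnion_le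
    _ ≤ _ := sum_card_perfectMatchingsThrough_le hab'

-- With `#c = n - 1` every inequality in the proof of `le_card_of_isCoverH_PMn` is an equality.
theorem not_isDiag_and_intersecting_of_isCoverH_PMn (hn : Even n) {c : Finset (Sym2 (Fin n))}
    (hc : IsCoverH (PMn n) c) (hcard : #c = n - 1) :
    (∀ g ∈ c, ¬g.IsDiag) ∧ ∀ g ∈ c, ∀ h ∈ c, ∃ v, v ∈ g ∧ v ∈ h := by
  rcases lt_or_ge n 2 with h2 | h2
  · simp [card_eq_zero.1 (show #c = 0 by omega)]
  obtain ⟨a, b, hab⟩ := (Fin.nontrivial_iff_two_le.2 h2).exists_pair_ne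
  have hab' : ¬s(a, b).IsDiag := Sym2.mk_isDiag_iff.not.2 hab
  set p := #(perfectMatchingsThrough s(a, b))
  have hp : 0 < p := card_perfectMatchingsThrough_pos hn hab'
  have hsum : ∑ k ∈ c, #(perfectMatchingsThrough k) = #(perfectMatchings n) := by
    refine le_antisymm ?_ (biUnion_perfectMatchingsThrough hc ▸ card_biUnion_le)
    rw [card_perfectMatchings hab, ← hcard]
    exact sum_card_perfectMatchingsThrough_le hab'
  have heq : ∀ k ∈ c, #(perfectMatchingsThrough k) = p := by
    refine (sum_eq_sum_iff_of_le fun k _ =>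
      card_perfectMatchingsThrough_le_of_not_isDiag hab' k).1 ?_
    rw [hsum, sum_const, smul_eq_mul, hcard, card_perfectMatchings hab]
  have hnd : ∀ g ∈ c, ¬g.IsDiag := fun g hg hdiag => by
    have := heq g hg
    rw [perfectMatchingsThrough_eq_empty hdiag, card_empty] at this
    omega
  refine ⟨hnd, fun g hg h hh => ?_⟩
  by_cases hgh : g = h
  · exact ⟨_, hgh ▸ Sym2.out_fst_mem g, Sym2.out_fst_mem h⟩
  by_contra! hdisj
  have hinter := card_biUnion_add_card_inter_le (t := perfectMatchingsThrough) hg hh hgh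
  rw [biUnion_perfectMatchingsThrough hc, hsum] at hinter
  induction g using Sym2.ind with | _ x y =>
  induction h using Sym2.ind with | _ z w =>
  obtain ⟨M, hM, hgM, hhM⟩ := exists_mem_PMn_of_disjoint hn
    (Sym2.mk_isDiag_iff.not.1 (hnd _ hg)) (Sym2.mk_isDiag_iff.not.1 (hnd _ hh))
    (disjoint_left.2 fun v hv hv' => hdisj v (by simpa using hv) (by simpa using hv'))
  have : 0 < #(perfectMatchingsThrough s(x, y) ∩ perfectMatchingsThrough s(z, w)) :=
    card_pos.2 ⟨M, mem_inter.2 ⟨mem_perfectMatchingsThrough.2 ⟨hM, hgM⟩,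
      mem_perfectMatchingsThrough.2 ⟨hM, hhM⟩⟩⟩
  omega

theorem mem_STn_of_isCoverH_PMn (hn : Even n) (h5 : 5 ≤ n) {c : Finset (Sym2 (Fin n))}
    (hc : IsCoverH (PMn n) c) (hcard : #c = n - 1) : c ∈ STn n := by
  obtain ⟨hnd, hint⟩ := not_isDiag_and_intersecting_of_isCoverH_PMn hn hc hcard
  obtain ⟨v, hv⟩ := Sym2.exists_forall_mem_of_intersecting (by omega) hnd hint
  refine mem_STn_iff.2 ⟨v, eq_of_subset_of_card_le (fun g hg => ?_) ?_⟩
  · exact mem_incidenceFinset_top.2 ⟨hv g hg, hnd g hg⟩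
  · rw [card_incidenceFinset_top, hcard]

theorem isCoverH_STn_iff {c : Finset (Sym2 (Fin n))} :
    IsCoverH (STn n) c ↔ ∀ v, ∃ e ∈ c, v ∈ e ∧ ¬e.IsDiag := by
  simp only [IsCoverH, mem_STn_iff, forall_exists_index, forall_eq_apply_imp_iff]
  simp only [Finset.Nonempty, mem_inter, mem_incidenceFinset_top]

theorem sum_card_filter_eq {c : Finset (Sym2 (Fin n))} {f : Fin n → Sym2 (Fin n)}
    (hf : ∀ v, f v ∈ c) : ∑ e ∈ c, #{v | f v = e} = n := by
  simpa using (card_eq_sum_card_fiberwise (s := univ) fun v _ => hf v).symm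

theorem le_two_mul_card_of_isCoverH_STn {c : Finset (Sym2 (Fin n))} (hc : IsCoverH (STn n) c) :
    n ≤ 2 * #c := by
  choose f hfc hvf _ using isCoverH_STn_iff.1 hc
  calc n = ∑ e ∈ c, #{v | f v = e} := (sum_card_filter_eq hfc).symm
    _ ≤ ∑ _e ∈ c, 2 := sum_le_sum fun e _ =>
        (card_le_card (Sym2.filter_eq_subset_toFinset hvf e)).trans (Sym2.card_toFinset_le_two e)
    _ = 2 * #c := by rw [sum_const, smul_eq_mul, mul_comm]

theorem mem_PMn_of_isCoverH_STn {c : Finset (Sym2 (Fin n))} (hc : IsCoverH (STn n) c)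
    (hcard : 2 * #c = n) : c ∈ PMn n := by
  choose f hfc hvf hnd using isCoverH_STn_iff.1 hc
  have hle : ∀ e ∈ c, #{v | f v = e} ≤ 2 := fun e _ =>
    (card_le_card (Sym2.filter_eq_subset_toFinset hvf e)).trans (Sym2.card_toFinset_le_two e)
  have htwo : ∀ e ∈ c, #{v | f v = e} = 2 := (sum_eq_sum_iff_of_le hle).1 (by
    rw [sum_card_filter_eq hfc, sum_const, smul_eq_mul]; omega)
  have hfib : ∀ e ∈ c, ({v | f v = e} : Finset (Fin n)) = e.toFinset := fun e he =>
    eq_of_subset_of_card_le (Sym2.filter_eq_subset_toFinset hvf e)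
      ((Sym2.card_toFinset_le_two e).trans (htwo e he).ge)
  refine ⟨fun e he => ?_, fun v => ⟨f v, ⟨hfc v, hvf v⟩, fun e ⟨he, hve⟩ => ?_⟩⟩
  · obtain ⟨v, hv⟩ := card_pos.1 ((htwo e he).trans_gt two_pos)
    exact (mem_filter.1 hv).2 ▸ hnd v
  · rw [← Sym2.mem_toFinset, ← hfib e he, mem_filter] at hve
    exact hve.2.symm

end CompleteGraph

/-- for even `n ≥ 6`, `(PM(K_n), ST(K_n))` is an `(n/2, n-1)`-loom. -/
theorem stmt16 (n : ℕ) (hn : Even n) (h6 : 6 ≤ n) :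
    IsLoom (n / 2) (n - 1) (PMn n) (STn n) := by
  have hhalf := Nat.two_mul_div_two_of_even hn
  obtain ⟨M, hM⟩ := exists_isPerfectMatchingOn (univ : Finset (Fin n)) (by simpa using hn)
  refine orthH_PMn_STn.isLoom (fun M hM => ?_) (fun S hS => ?_)
    ⟨M, isPerfectMatchingOn_univ_iff.1 hM⟩ ⟨_, mem_STn_iff.2 ⟨⟨0, by omega⟩, rfl⟩⟩
    (fun c hc => le_card_of_isCoverH_PMn hn hc)
    (fun c hc hcard => mem_STn_of_isCoverH_PMn hn (by omega) hc hcard)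
    (fun c hc => ?_) (fun c hc hcard => mem_PMn_of_isCoverH_STn hc (by omega))
  · have := two_mul_card_of_mem_PMn hM
    omega
  · obtain ⟨v, rfl⟩ := mem_STn_iff.1 hS
    exact card_incidenceFinset_top v
  · have := le_two_mul_card_of_isCoverH_STn hc
    omega
end

section
/- In any (3,3)-loom (A,B) on vertex set V: |V| = 9, ν(A) = ν(B) = 3, and for any two disjoint edges e, f of A, the set V \ (e ∪ f) is an edge of A. -/
open Finset

variable {V : Type*} [DecidableEq V]

/-!
Take disjoint edges `a₀, a₁` of `A` and `b₀, b₁` of `B`; they exist because an edge meeting every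
edge of its own family would be a `3`-cover of it, hence an edge of the other family meeting
itself in three vertices. As each edge of one family meets each edge of the other exactly once,
these four edges span eight vertices of a `3 × 3` grid (rows `a₀, a₁`, columns `b₀, b₁`), and an
`A`-edge avoiding the two vertices of `a₀ ∪ a₁` outside `b₀ ∪ b₁` fills the last cell `(2, 2)`.
Since `τ = 3`, `A = C₃(B)` and `B = C₃(A)`, each family has an edge avoiding any two vertices, and
one avoiding any three vertices two of which lie on a common edge of that family. Chasing such
edges shows that no vertex lies off the grid: every contradiction is an edge with two vertices
outside two disjoint edges of the other family, which it meets once each. So row `2` meets every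
`B`-edge and is an `A`-edge, and all edges live on the nine grid vertices. There, the complement
of two disjoint edges meets every edge of the other family, so it is an edge; this yields
matchings of size three, and no larger matching exists since its edges would meet a fixed edge of
the other family in distinct vertices.
-/

namespace OrthH

variable {A B : Set (Finset V)}

theorem symm (h : OrthH A B) : OrthH B A := fun b hb a ha => by
  rw [inter_comm]; exact h a ha b hb

theorem exists_mem (h : OrthH A B) {a b : Finset V} (ha : a ∈ A) (hb : b ∈ B) :
    ∃ x ∈ a, x ∈ b := by
  obtain ⟨x, hx⟩ : (a ∩ b).Nonempty := card_pos.mp (by rw [h a ha b hb]; exact one_pos)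
  exact ⟨x, mem_of_mem_inter_left hx, mem_of_mem_inter_right hx⟩

theorem eq_of_mem (h : OrthH A B) {a b : Finset V} (ha : a ∈ A) (hb : b ∈ B) {x y : V}
    (hxa : x ∈ a) (hxb : x ∈ b) (hya : y ∈ a) (hyb : y ∈ b) : x = y :=
  card_le_one.mp (h a ha b hb).le x (mem_inter.mpr ⟨hxa, hxb⟩) y (mem_inter.mpr ⟨hya, hyb⟩)

theorem exists_mem_notMem (h : OrthH A B) {a₁ a₂ b : Finset V} (ha₁ : a₁ ∈ A) (ha₂ : a₂ ∈ A)
    (hb : b ∈ B) (hcard : 2 < b.card) : ∃ z ∈ b, z ∉ a₁ ∧ z ∉ a₂ := by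
  by_contra! hz
  have hsub : b ⊆ (a₁ ∩ b) ∪ (a₂ ∩ b) := fun z hzb => by
    by_cases hz₁ : z ∈ a₁
    · exact mem_union_left _ (mem_inter.mpr ⟨hz₁, hzb⟩)
    · exact mem_union_right _ (mem_inter.mpr ⟨hz z hzb hz₁, hzb⟩)
  have := (card_le_card hsub).trans (card_union_le _ _)
  rw [h a₁ ha₁ b hb, h a₂ ha₂ b hb] at this
  omega

theorem eq_of_notMem_union (h : OrthH A B) {a b₁ b₂ : Finset V} (ha : a ∈ A)
    (hcard : a.card ≤ 3) (hb₁ : b₁ ∈ B) (hb₂ : b₂ ∈ B) (hdisj : Disjoint b₁ b₂) {x y : V}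
    (hx : x ∈ a) (hy : y ∈ a) (hx₁ : x ∉ b₁) (hx₂ : x ∉ b₂) (hy₁ : y ∉ b₁) (hy₂ : y ∉ b₂) :
    x = y := by
  by_contra hxy
  obtain ⟨p, hpa, hpb⟩ := h.exists_mem ha hb₁
  obtain ⟨q, hqa, hqb⟩ := h.exists_mem ha hb₂
  have hpq : p ≠ q := fun e => disjoint_left.mp hdisj hpb (e ▸ hqb)
  have hsub : ({p, q, x, y} : Finset V) ⊆ a := by
    simp only [insert_subset_iff, singleton_subset_iff]; exact ⟨hpa, hqa, hx, hy⟩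
  have := card_le_card hsub
  rw [card_insert_of_notMem, card_insert_of_notMem, card_pair hxy] at this
  · omega
  · simp only [mem_insert, mem_singleton, not_or]
    exact ⟨fun e => hx₂ (e ▸ hqb), fun e => hy₂ (e ▸ hqb)⟩
  · simp only [mem_insert, mem_singleton, not_or]
    exact ⟨hpq, fun e => hx₁ (e ▸ hpb), fun e => hy₁ (e ▸ hpb)⟩

theorem subset_union (h : OrthH A B) {b e₁ e₂ e₃ : Finset V} (hb : b ∈ B) (hcard : b.card ≤ 3)
    (he₁ : e₁ ∈ A) (he₂ : e₂ ∈ A) (he₃ : e₃ ∈ A) (h₁₂ : Disjoint e₁ e₂) (h₁₃ : Disjoint e₁ e₃)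
    (h₂₃ : Disjoint e₂ e₃) : b ⊆ e₁ ∪ e₂ ∪ e₃ := by
  have hinter : (b ∩ (e₁ ∪ e₂ ∪ e₃)).card = 3 := by
    rw [inter_union_distrib_left, inter_union_distrib_left, card_union_of_disjoint,
      card_union_of_disjoint, inter_comm, h e₁ he₁ b hb, inter_comm, h e₂ he₂ b hb, inter_comm,
      h e₃ he₃ b hb]
    · exact h₁₂.mono inter_subset_right inter_subset_right
    · exact disjoint_union_left.mpr ⟨h₁₃.mono inter_subset_right inter_subset_right,
        h₂₃.mono inter_subset_right inter_subset_right⟩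
  exact inter_eq_left.mp (eq_of_subset_of_card_le inter_subset_left (by omega))

end OrthH

theorem CoverNumIs.exists_disjoint {H : Set (Finset V)} {k : ℕ} (h : CoverNumIs H k)
    {c : Finset V} (hc : c.card < k) : ∃ e ∈ H, Disjoint c e := by
  by_contra! hne
  exact hc.not_ge (h.2 c fun e he => not_disjoint_iff_nonempty_inter.mp (hne e he))

theorem IsMatchingH.card_le {A B : Set (Finset V)} {M : Finset (Finset V)}
    (hM : IsMatchingH A M) (horth : OrthH A B) {b : Finset V} (hb : b ∈ B) : M.card ≤ b.card :=
  calc M.card = ∑ e ∈ M, (e ∩ b).card := by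
        rw [sum_congr rfl fun e he => horth e (hM.1 he) b hb, card_eq_sum_ones]
    _ = (M.biUnion (· ∩ b)).card :=
        (card_biUnion fun e he f hf hef =>
          (hM.2 he hf hef).mono inter_subset_left inter_subset_left).symm
    _ ≤ b.card := card_le_card (biUnion_subset.mpr fun _ _ => inter_subset_right)

theorem MatchNumIs.of_pairwise_disjoint {H : Set (Finset V)} {e₁ e₂ e₃ : Finset V}
    (he₁ : e₁ ∈ H) (he₂ : e₂ ∈ H) (he₃ : e₃ ∈ H) (hne₁ : e₁.Nonempty) (hne₂ : e₂.Nonempty)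
    (h₁₂ : Disjoint e₁ e₂) (h₁₃ : Disjoint e₁ e₃) (h₂₃ : Disjoint e₂ e₃)
    (hle : ∀ M, IsMatchingH H M → M.card ≤ 3) : MatchNumIs H 3 := by
  have hne {e f : Finset V} (he : e.Nonempty) (hef : Disjoint e f) : e ≠ f := by
    rintro rfl; exact he.ne_empty (disjoint_self.mp hef)
  refine ⟨⟨{e₁, e₂, e₃}, ⟨?_, ?_⟩, ?_⟩, hle⟩
  · simp [Set.insert_subset_iff, he₁, he₂, he₃]
  · simp [Set.pairwise_insert, h₁₂, h₁₃, h₂₃, h₁₂.symm, h₁₃.symm, h₂₃.symm]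
  · rw [card_insert_of_notMem, card_pair (hne hne₂ h₂₃)]
    simp [hne hne₁ h₁₂, hne hne₁ h₁₃]

namespace IsLoom

variable {r s : ℕ} {A B : Set (Finset V)}

theorem symm (hL : IsLoom r s A B) : IsLoom s r B A := by
  obtain ⟨hr, hs, horth, hA, hB, hτA, hτB, hAB, hBA⟩ := hL
  exact ⟨hs, hr, horth.symm, hB, hA, hτB, hτA, hBA, hAB⟩

theorem orth (hL : IsLoom r s A B) : OrthH A B := hL.2.2.1

theorem card_eq (hL : IsLoom r s A B) {a : Finset V} (ha : a ∈ A) : a.card = r :=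
  hL.2.2.2.1 a ha

theorem mem_iff (hL : IsLoom r s A B) {c : Finset V} : c ∈ A ↔ c.card = r ∧ IsCoverH B c := by
  rw [hL.2.2.2.2.2.2.2.1]; rfl

theorem nonempty (hL : IsLoom r s A B) : A.Nonempty := by
  obtain ⟨c, hcov, hc⟩ := hL.2.2.2.2.2.2.1.1
  exact ⟨c, hL.mem_iff.mpr ⟨hc, hcov⟩⟩

theorem exists_disjoint_of_card_lt (hL : IsLoom r s A B) {c : Finset V} (hc : c.card < s) :
    ∃ a ∈ A, Disjoint c a :=
  hL.2.2.2.2.2.1.exists_disjoint hc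

theorem exists_disjoint_of_two_le_card_inter (hL : IsLoom r s A B) {a₀ c : Finset V}
    (ha₀ : a₀ ∈ A) (hc : c.card = s) (h2 : 2 ≤ (a₀ ∩ c).card) : ∃ a ∈ A, Disjoint c a := by
  have hcB : c ∉ B := fun hcB => by have := hL.orth a₀ ha₀ c hcB; omega
  have hcov : ¬ IsCoverH A c := fun hcov => hcB (hL.symm.mem_iff.mpr ⟨hc, hcov⟩)
  simpa only [IsCoverH, not_forall, not_nonempty_iff_eq_empty, ← disjoint_iff_inter_eq_empty,
    exists_prop] using hcov

theorem exists_notMem_of_mem_of_mem (hL : IsLoom r 3 A B) {a₀ : Finset V} (ha₀ : a₀ ∈ A)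
    {p q : V} (hp : p ∈ a₀) (hq : q ∈ a₀) (x : V) : ∃ a ∈ A, p ∉ a ∧ q ∉ a ∧ x ∉ a := by
  suffices ∃ a ∈ A, Disjoint {p, q, x} a by
    simpa only [disjoint_insert_left, disjoint_singleton_left] using this
  rcases lt_or_eq_of_le (card_le_three (a := p) (b := q) (c := x)) with hlt | heq
  · exact hL.exists_disjoint_of_card_lt hlt
  refine hL.exists_disjoint_of_two_le_card_inter ha₀ heq ?_
  have hpq : p ≠ q := by
    rintro rfl
    have := card_le_two (a := p) (b := x)
    simp only [insert_eq_of_mem (mem_insert_self p {x})] at heq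
    omega
  calc 2 = ({p, q} : Finset V).card := (card_pair hpq).symm
    _ ≤ _ := card_le_card (by simp [insert_subset_iff, hp, hq])

theorem exists_disjoint_of_mem (hL : IsLoom r r A B) (hr : 2 ≤ r) {a : Finset V} (ha : a ∈ A) :
    ∃ a' ∈ A, Disjoint a a' := by
  by_contra! h
  have haB : a ∈ B := hL.symm.mem_iff.mpr
    ⟨hL.card_eq ha, fun e he => not_disjoint_iff_nonempty_inter.mp (h e he)⟩
  have := hL.orth a ha a haB
  rw [inter_self, hL.card_eq ha] at this
  omega

theorem exists_mem_of_mem (hL : IsLoom r s A B) {a : Finset V} (ha : a ∈ A) {v : V}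
    (hv : v ∈ a) : ∃ b ∈ B, v ∈ b := by
  by_contra! h
  obtain ⟨b, hb, hdisj⟩ := hL.symm.exists_disjoint_of_card_lt (c := a.erase v)
    (by rw [card_erase_of_mem hv, hL.card_eq ha]; have := hL.1; omega)
  obtain ⟨x, hxa, hxb⟩ := hL.orth.exists_mem ha hb
  exact disjoint_left.mp hdisj (mem_erase.mpr ⟨fun e => h b hb (e ▸ hxb), hxa⟩) hxb

end IsLoom

structure Grid (A B : Set (Finset V)) where
  pt : Fin 3 × Fin 3 → V
  injective : Function.Injective pt
  row_zero_mem : {pt (0, 0), pt (0, 1), pt (0, 2)} ∈ A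
  row_one_mem : {pt (1, 0), pt (1, 1), pt (1, 2)} ∈ A
  col_zero_mem : {pt (0, 0), pt (1, 0), pt (2, 0)} ∈ B
  col_one_mem : {pt (0, 1), pt (1, 1), pt (2, 1)} ∈ B

namespace Grid

variable {A B : Set (Finset V)} (F : Grid A B)

def swapRows : Grid A B where
  pt c := F.pt (![1, 0, 2] c.1, c.2)
  injective := F.injective.comp ((by decide : Function.Injective ![(1 : Fin 3), 0, 2]).prodMap
    Function.injective_id)
  row_zero_mem := F.row_one_mem
  row_one_mem := F.row_zero_mem
  col_zero_mem := by
    show {F.pt (1, 0), F.pt (0, 0), F.pt (2, 0)} ∈ B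
    rw [insert_comm]; exact F.col_zero_mem
  col_one_mem := by
    show {F.pt (1, 1), F.pt (0, 1), F.pt (2, 1)} ∈ B
    rw [insert_comm]; exact F.col_one_mem

def swapCols : Grid A B where
  pt c := F.pt (c.1, ![1, 0, 2] c.2)
  injective := F.injective.comp (Function.injective_id.prodMap
    (by decide : Function.Injective ![(1 : Fin 3), 0, 2]))
  row_zero_mem := by
    show {F.pt (0, 1), F.pt (0, 0), F.pt (0, 2)} ∈ A
    rw [insert_comm]; exact F.row_zero_mem
  row_one_mem := by
    show {F.pt (1, 1), F.pt (1, 0), F.pt (1, 2)} ∈ A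
    rw [insert_comm]; exact F.row_one_mem
  col_zero_mem := F.col_one_mem
  col_one_mem := F.col_zero_mem

def transpose : Grid B A where
  pt c := F.pt (c.2, c.1)
  injective := F.injective.comp Prod.swap_injective
  row_zero_mem := F.col_zero_mem
  row_one_mem := F.col_one_mem
  col_zero_mem := F.row_zero_mem
  col_one_mem := F.row_one_mem

def row (i : Fin 3) : Finset V := {F.pt (i, 0), F.pt (i, 1), F.pt (i, 2)}

def col (j : Fin 3) : Finset V := {F.pt (0, j), F.pt (1, j), F.pt (2, j)}

@[simp]
theorem pt_inj {c d : Fin 3 × Fin 3} : F.pt c = F.pt d ↔ c = d :=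
  F.injective.eq_iff

@[simp]
theorem pt_mem_row {c : Fin 3 × Fin 3} {i : Fin 3} : F.pt c ∈ F.row i ↔ c.1 = i := by
  obtain ⟨k, j⟩ := c
  fin_cases j <;> simp [row, Prod.ext_iff]

@[simp]
theorem pt_mem_col {c : Fin 3 × Fin 3} {j : Fin 3} : F.pt c ∈ F.col j ↔ c.2 = j := by
  obtain ⟨i, k⟩ := c
  fin_cases i <;> simp [col, Prod.ext_iff]

@[simp]
theorem transpose_col (j : Fin 3) : F.transpose.col j = F.row j := rfl

theorem disjoint_row {i k : Fin 3} (h : i ≠ k) : Disjoint (F.row i) (F.row k) := by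
  simp only [disjoint_left, row, mem_insert, mem_singleton]
  rintro _ (rfl | rfl | rfl) <;> simp [h]

theorem disjoint_col {j k : Fin 3} (h : j ≠ k) : Disjoint (F.col j) (F.col k) :=
  F.transpose.disjoint_row h

theorem notMem_row {x : V} (hx : ∀ c, F.pt c ≠ x) (i : Fin 3) : x ∉ F.row i := by
  simp only [row, mem_insert, mem_singleton, not_or]
  exact ⟨(hx _).symm, (hx _).symm, (hx _).symm⟩

theorem notMem_col {x : V} (hx : ∀ c, F.pt c ≠ x) (j : Fin 3) : x ∉ F.col j :=
  F.transpose.notMem_row (fun _ => hx _) j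

variable (hL : IsLoom 3 3 A B)
include hL

theorem exists_pt_eq (pt : Fin 3 × Fin 3 → V) {a₀ a₁ b₀ b₁ : Finset V} (ha₀ : a₀ ∈ A)
    (ha₁ : a₁ ∈ A) (hb₀ : b₀ ∈ B) (hb₁ : b₁ ∈ B)
    (hpt : ∀ c, (pt c ∈ a₀ ↔ c.1 = 0) ∧ (pt c ∈ a₁ ↔ c.1 = 1) ∧ (pt c ∈ b₀ ↔ c.2 = 0) ∧
      (pt c ∈ b₁ ↔ c.2 = 1)) :
    ∃ F : Grid A B, F.pt = pt := by
  have hinj : Function.Injective pt := fun c d h => by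
    have h₀ : c.1 = 0 ↔ d.1 = 0 := by rw [← (hpt c).1, ← (hpt d).1, h]
    have h₁ : c.1 = 1 ↔ d.1 = 1 := by rw [← (hpt c).2.1, ← (hpt d).2.1, h]
    have h₂ : c.2 = 0 ↔ d.2 = 0 := by rw [← (hpt c).2.2.1, ← (hpt d).2.2.1, h]
    have h₃ : c.2 = 1 ↔ d.2 = 1 := by rw [← (hpt c).2.2.2, ← (hpt d).2.2.2, h]
    exact Prod.ext (by omega) (by omega)
  have hmem {H : Set (Finset V)} {e : Finset V} (he : e ∈ H) (he3 : e.card = 3) (c d f)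
      (hcd : c ≠ d) (hcf : c ≠ f) (hdf : d ≠ f) (hsub : ∀ v ∈ [c, d, f], pt v ∈ e) :
      {pt c, pt d, pt f} ∈ H := by
    have hsub' : ({pt c, pt d, pt f} : Finset V) ⊆ e := by simpa [insert_subset_iff] using hsub
    have hcard : e.card ≤ ({pt c, pt d, pt f} : Finset V).card := by
      simp [card_insert_of_notMem, hinj.eq_iff, he3, hcd, hcf, hdf]
    exact eq_of_subset_of_card_le hsub' hcard ▸ he
  refine ⟨⟨pt, hinj, ?_, ?_, ?_, ?_⟩, rfl⟩
  · exact hmem ha₀ (hL.card_eq ha₀) _ _ _ (by decide) (by decide) (by decide) (by simp [hpt])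
  · exact hmem ha₁ (hL.card_eq ha₁) _ _ _ (by decide) (by decide) (by decide) (by simp [hpt])
  · exact hmem hb₀ (hL.symm.card_eq hb₀) _ _ _ (by decide) (by decide) (by decide) (by simp [hpt])
  · exact hmem hb₁ (hL.symm.card_eq hb₁) _ _ _ (by decide) (by decide) (by decide) (by simp [hpt])

theorem eq_of_notMem_col {a : Finset V} (ha : a ∈ A) {x y : V} (hx : x ∈ a) (hy : y ∈ a)
    (hx₀ : x ∉ F.col 0) (hx₁ : x ∉ F.col 1) (hy₀ : y ∉ F.col 0) (hy₁ : y ∉ F.col 1) : x = y :=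
  hL.orth.eq_of_notMem_union ha (hL.card_eq ha).le F.col_zero_mem F.col_one_mem
    (F.disjoint_col (by decide)) hx hy hx₀ hx₁ hy₀ hy₁

theorem eq_or_eq_or_eq_of_mem {a : Finset V} (ha : a ∈ A) {p q z v : V} (hp : p ∈ a)
    (hp₀ : p ∈ F.col 0) (hq : q ∈ a) (hq₁ : q ∈ F.col 1) (hz : z ∈ a) (hz₀ : z ∉ F.col 0)
    (hz₁ : z ∉ F.col 1) (hv : v ∈ a) : v = p ∨ v = q ∨ v = z := by
  by_cases hv₀ : v ∈ F.col 0
  · exact Or.inl (hL.orth.eq_of_mem ha F.col_zero_mem hv hv₀ hp hp₀)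
  by_cases hv₁ : v ∈ F.col 1
  · exact Or.inr (Or.inl (hL.orth.eq_of_mem ha F.col_one_mem hv hv₁ hq hq₁))
  exact Or.inr (Or.inr (F.eq_of_notMem_col hL ha hv hz hv₀ hv₁ hz₀ hz₁))

theorem false_of_row_two_subset {x : V} (hx : ∀ c, F.pt c ≠ x) {b : Finset V} (hb : b ∈ B)
    (hxb : x ∈ b) {a : Finset V} (ha : a ∈ A) (h₀ : F.pt (2, 0) ∈ a) (h₁ : F.pt (2, 1) ∈ a)
    (h₂ : F.pt (2, 2) ∈ a) : False := by
  obtain ⟨v, hva, hvb⟩ := hL.orth.exists_mem ha hb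
  have hx₀ := F.notMem_row hx 0
  have hx₁ := F.notMem_row hx 1
  rcases F.eq_or_eq_or_eq_of_mem hL ha h₀ (by simp) h₁ (by simp) h₂ (by simp) (by simp) hva with
    rfl | rfl | rfl <;>
  exact hx _ (F.transpose.eq_of_notMem_col hL.symm hb hvb hxb (by simp) (by simp) hx₀ hx₁)

theorem exists_mem_corner_zero_two {α : Finset V} (hα : α ∈ A) (h₂₂ : F.pt (2, 2) ∈ α)
    (h₀₀ : F.pt (0, 0) ∈ α) : ∃ β ∈ B, F.pt (2, 2) ∈ β ∧ F.pt (0, 2) ∈ β := by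
  obtain ⟨q, hqα, hq⟩ := hL.orth.exists_mem hα F.col_one_mem
  obtain ⟨β, hβ, hqβ, h₀₁β, h₀₀β⟩ := hL.symm.exists_notMem_of_mem_of_mem F.col_one_mem hq
    (F.pt_mem_col (c := (0, 1)).mpr rfl) (F.pt (0, 0))
  refine ⟨β, hβ, ?_, ?_⟩
  · obtain ⟨v, hvα, hvβ⟩ := hL.orth.exists_mem hα hβ
    rcases F.eq_or_eq_or_eq_of_mem hL hα h₀₀ (by simp) hqα hq h₂₂ (by simp) (by simp) hvα with
      rfl | rfl | rfl
    · exact absurd hvβ h₀₀β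
    · exact absurd hvβ hqβ
    · exact hvβ
  · obtain ⟨w, hw, hwβ⟩ := hL.orth.exists_mem F.row_zero_mem hβ
    simp only [mem_insert, mem_singleton] at hw
    rcases hw with rfl | rfl | rfl
    · exact absurd hwβ h₀₀β
    · exact absurd hwβ h₀₁β
    · exact hwβ

/-- A `B`-edge avoiding `pt (0, 1)`, `pt (1, 1)` and `pt (1, 0)` meets both `A`-edges outside
rows `0` and `1`, hence in the same vertex. -/
theorem false_of_mem_two_zero_of_mem_one_zero {x : V} (hx : ∀ c, F.pt c ≠ x) {a : Finset V}
    (ha : a ∈ A) (hxa : x ∈ a) (h₁₀a : F.pt (1, 0) ∈ a) {α : Finset V} (hα : α ∈ A)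
    (h₂₀α : F.pt (2, 0) ∈ α) (h₂₂α : F.pt (2, 2) ∈ α) : False := by
  obtain ⟨b, hb, h₀₁b, h₁₁b, h₁₀b⟩ := hL.symm.exists_notMem_of_mem_of_mem F.col_one_mem
    (F.pt_mem_col (c := (0, 1)).mpr rfl) (F.pt_mem_col (c := (1, 1)).mpr rfl) (F.pt (1, 0))
  have hcol₁ {v : V} (hv : v ∈ F.col 1) (hvb : v ∈ b) : v = F.pt (2, 1) := by
    simp only [col, mem_insert, mem_singleton] at hv
    rcases hv with rfl | rfl | rfl
    exacts [absurd hvb h₀₁b, absurd hvb h₁₁b, rfl]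
  obtain ⟨q, hqα, hq⟩ := hL.orth.exists_mem hα F.col_one_mem
  obtain ⟨q', hq'a, hq'⟩ := hL.orth.exists_mem ha F.col_one_mem
  obtain ⟨z, hzα, hzb⟩ := hL.orth.exists_mem hα hb
  obtain ⟨z', hz'a, hz'b⟩ := hL.orth.exists_mem ha hb
  have hz : z = F.pt (2, 0) ∨ z = F.pt (2, 1) ∨ z = F.pt (2, 2) := by
    rcases F.eq_or_eq_or_eq_of_mem hL hα h₂₀α (by simp) hqα hq h₂₂α (by simp) (by simp) hzα with
      h | h | h
    exacts [Or.inl h, Or.inr (Or.inl (h.trans (hcol₁ hq (h ▸ hzb)))), Or.inr (Or.inr h)]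
  have hz' : z' = F.pt (2, 1) ∨ z' = x := by
    rcases F.eq_or_eq_or_eq_of_mem hL ha h₁₀a (by simp) hq'a hq' hxa (F.notMem_col hx 0)
      (F.notMem_col hx 1) hz'a with rfl | rfl | h
    exacts [absurd hz'b h₁₀b, Or.inl (hcol₁ hq' hz'b), Or.inr h]
  have hzz' : z = z' := by
    have hz₀₁ : z ∉ F.row 0 ∧ z ∉ F.row 1 := by rcases hz with rfl | rfl | rfl <;> simp
    have hz'₀₁ : z' ∉ F.row 0 ∧ z' ∉ F.row 1 := by
      rcases hz' with rfl | rfl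
      · simp
      · exact ⟨F.notMem_row hx 0, F.notMem_row hx 1⟩
    exact F.transpose.eq_of_notMem_col hL.symm hb hzb hz'b hz₀₁.1 hz₀₁.2 hz'₀₁.1 hz'₀₁.2
  subst hzz'
  rcases hz' with rfl | rfl
  · obtain ⟨b', hb', hxb'⟩ := hL.exists_mem_of_mem ha hxa
    exact F.false_of_row_two_subset hL hx hb' hxb' hα h₂₀α hzα h₂₂α
  · rcases hz with h | h | h <;> exact hx _ h.symm

theorem false_of_mem_corner_zero_two_one_zero {x : V} (hx : ∀ c, F.pt c ≠ x) {a : Finset V}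
    (ha : a ∈ A) (hxa : x ∈ a) {β : Finset V} (hβ : β ∈ B) (h₀₂ : F.pt (0, 2) ∈ β)
    (h₁₀ : F.pt (1, 0) ∈ β) (h₂₂ : F.pt (2, 2) ∈ β) : False := by
  have hβ_cases {v : V} (hv : v ∈ β) : v = F.pt (0, 2) ∨ v = F.pt (1, 0) ∨ v = F.pt (2, 2) :=
    F.transpose.eq_or_eq_or_eq_of_mem hL.symm hβ h₀₂ (by simp) h₁₀ (by simp) h₂₂ (by simp) (by simp)
      hv
  have h₁₀a : F.pt (1, 0) ∈ a := by
    obtain ⟨v, hva, hvβ⟩ := hL.orth.exists_mem ha hβ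
    have hx₀₁ := F.notMem_col hx
    rcases hβ_cases hvβ with rfl | rfl | rfl
    · exact absurd (F.eq_of_notMem_col hL ha hva hxa (by simp) (by simp) (hx₀₁ 0) (hx₀₁ 1)) (hx _)
    · exact hva
    · exact absurd (F.eq_of_notMem_col hL ha hva hxa (by simp) (by simp) (hx₀₁ 0) (hx₀₁ 1)) (hx _)
  obtain ⟨α, hα, h₀₀α, h₀₂α, h₁₀α⟩ := hL.exists_notMem_of_mem_of_mem F.row_zero_mem
    (F.pt_mem_row (c := (0, 0)).mpr rfl) (F.pt_mem_row (c := (0, 2)).mpr rfl) (F.pt (1, 0))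
  have h₂₂α : F.pt (2, 2) ∈ α := by
    obtain ⟨v, hvα, hvβ⟩ := hL.orth.exists_mem hα hβ
    rcases hβ_cases hvβ with rfl | rfl | rfl
    exacts [absurd hvα h₀₂α, absurd hvα h₁₀α, hvα]
  have h₂₀α : F.pt (2, 0) ∈ α := by
    obtain ⟨v, hvα, hv⟩ := hL.orth.exists_mem hα F.col_zero_mem
    simp only [mem_insert, mem_singleton] at hv
    rcases hv with rfl | rfl | rfl
    exacts [absurd hvα h₀₀α, absurd hvα h₁₀α, hvα]
  exact F.false_of_mem_two_zero_of_mem_one_zero hL hx ha hxa h₁₀a hα h₂₀α h₂₂α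

theorem false_of_mem_corner_zero_two {x : V} (hx : ∀ c, F.pt c ≠ x) {a : Finset V} (ha : a ∈ A)
    (hxa : x ∈ a) {β : Finset V} (hβ : β ∈ B) (h₂₂ : F.pt (2, 2) ∈ β)
    (h₀₂ : F.pt (0, 2) ∈ β) : False := by
  obtain ⟨v, hv, hvβ⟩ := hL.orth.exists_mem F.row_one_mem hβ
  simp only [mem_insert, mem_singleton] at hv
  rcases hv with rfl | rfl | rfl
  · exact F.false_of_mem_corner_zero_two_one_zero hL hx ha hxa hβ h₀₂ hvβ h₂₂
  · exact F.swapCols.false_of_mem_corner_zero_two_one_zero hL (fun _ => hx _) ha hxa hβ h₀₂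
      hvβ h₂₂
  · exact F.transpose.false_of_row_two_subset hL.symm (fun _ => hx _) ha hxa hβ h₀₂ hvβ h₂₂

/-- Up to swapping rows `0, 1` and columns `0, 1`, the `A`-edge through the corner either
contains `pt (0, 0)` or is row `2`. -/
theorem exists_eq_pt_of_mem {α : Finset V} (hα : α ∈ A) (h₂₂ : F.pt (2, 2) ∈ α) {a : Finset V}
    (ha : a ∈ A) {x : V} (hxa : x ∈ a) : ∃ c, F.pt c = x := by
  by_contra! hx
  obtain ⟨p, hpα, hp⟩ := hL.orth.exists_mem hα F.col_zero_mem
  obtain ⟨q, hqα, hq⟩ := hL.orth.exists_mem hα F.col_one_mem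
  simp only [mem_insert, mem_singleton] at hp hq
  rcases hp with rfl | rfl | rfl
  · obtain ⟨β, hβ, hβ₂₂, hβ₀₂⟩ := F.exists_mem_corner_zero_two hL hα h₂₂ hpα
    exact F.false_of_mem_corner_zero_two hL hx ha hxa hβ hβ₂₂ hβ₀₂
  · obtain ⟨β, hβ, hβ₂₂, hβ₀₂⟩ := F.swapRows.exists_mem_corner_zero_two hL hα h₂₂ hpα
    exact F.swapRows.false_of_mem_corner_zero_two hL (fun _ => hx _) ha hxa hβ hβ₂₂ hβ₀₂
  rcases hq with rfl | rfl | rfl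
  · obtain ⟨β, hβ, hβ₂₂, hβ₀₂⟩ := F.swapCols.exists_mem_corner_zero_two hL hα h₂₂ hqα
    exact F.false_of_mem_corner_zero_two hL hx ha hxa hβ hβ₂₂ hβ₀₂
  · obtain ⟨β, hβ, hβ₂₂, hβ₀₂⟩ := F.swapRows.swapCols.exists_mem_corner_zero_two hL hα h₂₂ hqα
    exact F.swapRows.false_of_mem_corner_zero_two hL (fun _ => hx _) ha hxa hβ hβ₂₂ hβ₀₂
  · obtain ⟨b, hb, hxb⟩ := hL.exists_mem_of_mem ha hxa
    exact F.false_of_row_two_subset hL hx hb hxb hα hpα hqα h₂₂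

theorem row_two_mem {α : Finset V} (hα : α ∈ A) (h₂₂ : F.pt (2, 2) ∈ α) : F.row 2 ∈ A := by
  refine hL.mem_iff.mpr ⟨by simp [row, card_insert_of_notMem], fun b hb => ?_⟩
  obtain ⟨z, hzb, hz₀, hz₁⟩ := hL.orth.exists_mem_notMem F.row_zero_mem F.row_one_mem hb
    (by rw [hL.symm.card_eq hb]; norm_num)
  obtain ⟨a, ha, hza⟩ := hL.symm.exists_mem_of_mem hb hzb
  obtain ⟨⟨i, j⟩, rfl⟩ := F.exists_eq_pt_of_mem hL hα h₂₂ ha hza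
  have hi : i = 2 := by
    have h₀ : i ≠ 0 := fun h => hz₀ (F.pt_mem_row.mpr h)
    have h₁ : i ≠ 1 := fun h => hz₁ (F.pt_mem_row.mpr h)
    omega
  exact ⟨F.pt (i, j), mem_inter.mpr ⟨F.pt_mem_row.mpr hi, hzb⟩⟩

end Grid

namespace IsLoom

variable {A B : Set (Finset V)}

theorem exists_grid (hL : IsLoom 3 3 A B) : ∃ F : Grid A B, ∃ α ∈ A, F.pt (2, 2) ∈ α := by
  have hA3 {a : Finset V} (ha : a ∈ A) : 2 < a.card := by rw [hL.card_eq ha]; norm_num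
  have hB3 {b : Finset V} (hb : b ∈ B) : 2 < b.card := by rw [hL.symm.card_eq hb]; norm_num
  obtain ⟨a₀, ha₀⟩ := hL.nonempty
  obtain ⟨a₁, ha₁, ha₀₁⟩ := hL.exists_disjoint_of_mem (by norm_num) ha₀
  obtain ⟨b₀, hb₀⟩ := hL.symm.nonempty
  obtain ⟨b₁, hb₁, hb₀₁⟩ := hL.symm.exists_disjoint_of_mem (by norm_num) hb₀
  obtain ⟨x₀₀, h₀₀a, h₀₀b⟩ := hL.orth.exists_mem ha₀ hb₀
  obtain ⟨x₀₁, h₀₁a, h₀₁b⟩ := hL.orth.exists_mem ha₀ hb₁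
  obtain ⟨x₁₀, h₁₀a, h₁₀b⟩ := hL.orth.exists_mem ha₁ hb₀
  obtain ⟨x₁₁, h₁₁a, h₁₁b⟩ := hL.orth.exists_mem ha₁ hb₁
  obtain ⟨x₀₂, h₀₂a, h₀₂b₀, h₀₂b₁⟩ := hL.orth.symm.exists_mem_notMem hb₀ hb₁ ha₀ (hA3 ha₀)
  obtain ⟨x₁₂, h₁₂a, h₁₂b₀, h₁₂b₁⟩ := hL.orth.symm.exists_mem_notMem hb₀ hb₁ ha₁ (hA3 ha₁)
  obtain ⟨x₂₀, h₂₀b, h₂₀a₀, h₂₀a₁⟩ := hL.orth.exists_mem_notMem ha₀ ha₁ hb₀ (hB3 hb₀)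
  obtain ⟨x₂₁, h₂₁b, h₂₁a₀, h₂₁a₁⟩ := hL.orth.exists_mem_notMem ha₀ ha₁ hb₁ (hB3 hb₁)
  obtain ⟨α, hα, hx₀₂α, hx₁₂α⟩ : ∃ α ∈ A, x₀₂ ∉ α ∧ x₁₂ ∉ α := by
    simpa only [disjoint_insert_left, disjoint_singleton_left] using
      hL.exists_disjoint_of_card_lt (c := {x₀₂, x₁₂}) (card_le_two.trans_lt (by norm_num))
  obtain ⟨x₂₂, h₂₂α, h₂₂b₀, h₂₂b₁⟩ := hL.orth.symm.exists_mem_notMem hb₀ hb₁ hα (hA3 hα)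
  have h₂₂a₀ : x₂₂ ∉ a₀ := fun h => hx₀₂α <| (hL.orth.eq_of_notMem_union ha₀ (hL.card_eq ha₀).le
    hb₀ hb₁ hb₀₁ h₀₂a h h₀₂b₀ h₀₂b₁ h₂₂b₀ h₂₂b₁) ▸ h₂₂α
  have h₂₂a₁ : x₂₂ ∉ a₁ := fun h => hx₁₂α <| (hL.orth.eq_of_notMem_union ha₁ (hL.card_eq ha₁).le
    hb₀ hb₁ hb₀₁ h₁₂a h h₁₂b₀ h₁₂b₁ h₂₂b₀ h₂₂b₁) ▸ h₂₂α
  have hA₀ := disjoint_left.mp ha₀₁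
  have hA₁ := disjoint_right.mp ha₀₁
  have hB₀ := disjoint_left.mp hb₀₁
  have hB₁ := disjoint_right.mp hb₀₁
  let pt : Fin 3 × Fin 3 → V := fun c =>
    ![![x₀₀, x₀₁, x₀₂], ![x₁₀, x₁₁, x₁₂], ![x₂₀, x₂₁, x₂₂]] c.1 c.2
  obtain ⟨F, hF⟩ := Grid.exists_pt_eq hL pt ha₀ ha₁ hb₀ hb₁ fun ⟨i, j⟩ => by
    fin_cases i <;> fin_cases j <;> simp [pt, *]
  exact ⟨F, α, hα, by rw [hF]; exact h₂₂α⟩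

theorem exists_three_pairwise_disjoint (hL : IsLoom 3 3 A B) :
    ∃ e₁ ∈ A, ∃ e₂ ∈ A, ∃ e₃ ∈ A, Disjoint e₁ e₂ ∧ Disjoint e₁ e₃ ∧ Disjoint e₂ e₃ := by
  obtain ⟨F, α, hα, h₂₂⟩ := hL.exists_grid
  exact ⟨F.row 0, F.row_zero_mem, F.row 1, F.row_one_mem, F.row 2, F.row_two_mem hL hα h₂₂,
    F.disjoint_row (by decide), F.disjoint_row (by decide), F.disjoint_row (by decide)⟩

theorem exists_vertex_set (hL : IsLoom 3 3 A B) : ∃ U : Finset V, U.card = 9 ∧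
    (∀ a ∈ A, a ⊆ U) ∧ (∀ b ∈ B, b ⊆ U) ∧ vertsH A ∪ vertsH B = U := by
  obtain ⟨e₁, he₁, e₂, he₂, e₃, he₃, h₁₂, h₁₃, h₂₃⟩ := hL.exists_three_pairwise_disjoint
  have hBU (b) (hb : b ∈ B) : b ⊆ e₁ ∪ e₂ ∪ e₃ :=
    hL.orth.subset_union hb (hL.symm.card_eq hb).le he₁ he₂ he₃ h₁₂ h₁₃ h₂₃
  have hAU (a) (ha : a ∈ A) : a ⊆ e₁ ∪ e₂ ∪ e₃ := fun v hv => by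
    obtain ⟨b, hb, hvb⟩ := hL.exists_mem_of_mem ha hv
    exact hBU b hb hvb
  refine ⟨e₁ ∪ e₂ ∪ e₃, ?_, hAU, hBU, ?_⟩
  · rw [card_union_of_disjoint (disjoint_union_left.mpr ⟨h₁₃, h₂₃⟩), card_union_of_disjoint h₁₂,
      hL.card_eq he₁, hL.card_eq he₂, hL.card_eq he₃]
  refine Set.Subset.antisymm (Set.union_subset ?_ ?_) fun v hv => Or.inl ?_
  · exact Set.iUnion₂_subset fun a ha => coe_subset.mpr (hAU a ha)
  · exact Set.iUnion₂_subset fun b hb => coe_subset.mpr (hBU b hb)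
  simp only [coe_union, Set.mem_union, mem_coe] at hv
  simp only [vertsH, Set.mem_iUnion, mem_coe]
  rcases hv with (hv | hv) | hv
  exacts [⟨e₁, he₁, hv⟩, ⟨e₂, he₂, hv⟩, ⟨e₃, he₃, hv⟩]

section VertexSet

variable (hL : IsLoom 3 3 A B) {U : Finset V} (hU : U.card = 9) (hAU : ∀ a ∈ A, a ⊆ U)
  (hBU : ∀ b ∈ B, b ⊆ U)
include hL hU hAU hBU

theorem sdiff_union_mem {e f : Finset V} (he : e ∈ A) (hf : f ∈ A) (hef : Disjoint e f) :
    U \ (e ∪ f) ∈ A := by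
  refine hL.mem_iff.mpr ⟨?_, fun b hb => ?_⟩
  · rw [card_sdiff_of_subset (union_subset (hAU e he) (hAU f hf)), card_union_of_disjoint hef,
      hL.card_eq he, hL.card_eq hf, hU]
  · obtain ⟨z, hzb, hze, hzf⟩ :=
      hL.orth.exists_mem_notMem he hf hb (by rw [hL.symm.card_eq hb]; norm_num)
    exact ⟨z, mem_inter.mpr ⟨mem_sdiff.mpr ⟨hBU b hb hzb, by simp [hze, hzf]⟩, hzb⟩⟩

theorem matchNumIs_three : MatchNumIs A 3 := by
  have hne {a : Finset V} (ha : a ∈ A) : a.Nonempty :=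
    card_pos.mp (by rw [hL.card_eq ha]; norm_num)
  obtain ⟨a₁, ha₁⟩ := hL.nonempty
  obtain ⟨a₂, ha₂, ha₁₂⟩ := hL.exists_disjoint_of_mem (by norm_num) ha₁
  obtain ⟨b, hb⟩ := hL.symm.nonempty
  exact .of_pairwise_disjoint ha₁ ha₂ (hL.sdiff_union_mem hU hAU hBU ha₁ ha₂ ha₁₂) (hne ha₁)
    (hne ha₂) ha₁₂ (disjoint_sdiff.mono_left subset_union_left)
    (disjoint_sdiff.mono_left subset_union_right)
    fun M hM => (hM.card_le hL.orth hb).trans (hL.symm.card_eq hb).le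

end VertexSet

end IsLoom

/-- in a `(3,3)`-loom on vertex set `V`: `|V| = 9`,
`ν(A) = ν(B) = 3`, and for disjoint `e, f ∈ A`, `V \ (e ∪ f) ∈ A`. -/
theorem stmt18 (A B : Set (Finset V)) (hL : IsLoom 3 3 A B) :
    (vertsH A ∪ vertsH B).ncard = 9 ∧ MatchNumIs A 3 ∧ MatchNumIs B 3 ∧
      (∀ e ∈ A, ∀ f ∈ A, Disjoint e f →
        ∃ g ∈ A, (g : Set V) = (vertsH A ∪ vertsH B) \ ((e : Set V) ∪ (f : Set V))) := by
  obtain ⟨U, hU, hAU, hBU, hverts⟩ := hL.exists_vertex_set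
  refine ⟨by rw [hverts, Set.ncard_coe_finset, hU], hL.matchNumIs_three hU hAU hBU,
    hL.symm.matchNumIs_three hU hBU hAU, fun e he f hf hef => ⟨U \ (e ∪ f), ?_, ?_⟩⟩
  · exact hL.sdiff_union_mem hU hAU hBU he hf hef
  · rw [hverts, coe_sdiff, coe_union]
end
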